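/- arXiv:2105.01193 — 5 statements merged into one kernel-verified Lean document; each statement's English description precedes it below -/
import Mathlib

section
/- Let G be a graph of maximum degree d, let {i,j} be an edge, and let N_ij be the set of edges incident to {i,j} (including {i,j} itself). For m ≥ 2, the number of ordered m-tuples of edges (e_1, ..., e_m) ∈ N_ij^m such that no vertex outside {i,j} appears in exactly one of the edges e_1,...,e_m is at most (2m√d)^m. -/
/-!
Every edge of `N_ij` other than `{i,j}` has exactly one endpoint `v` outside `{i,j}`, and at most
two edges of `N_ij` pass through such a `v`. Encode a tuple entry by entry: at the first occurrence
of an outside vertex write down the edge itself (at most `2d` choices), at `{i,j}` write down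
`{i,j}`, and at any later occurrence write down the position of the first occurrence together with
one bit saying whether the edge is the same. Since no outside vertex occurs exactly once, at most
`m / 2` entries are first occurrences, so the number of tuples is at most
`∑_{2f ≤ m} C(m,f) (2d)^f (2f+1)^(m-f)`. For `m ≥ 3` this is at most `√d^m (m+3)^m ≤ (2m√d)^m`
by the binomial theorem; for `m = 2` it is `1 + 12d ≤ 16d`.
-/

open Finset

section FirstIndex

variable {ι α : Type*} [Fintype ι] [LinearOrder ι] [DecidableEq α]

def firstIndex (f : ι → α) (k : ι) : ι := (univ.filter fun p => f p = f k).min' ⟨k, by simp⟩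

theorem apply_firstIndex (f : ι → α) (k : ι) : f (firstIndex f k) = f k :=
  (mem_filter.1 (min'_mem (univ.filter fun p => f p = f k) _)).2

theorem firstIndex_eq_firstIndex_iff {f : ι → α} {k k' : ι} :
    firstIndex f k = firstIndex f k' ↔ f k = f k' := by
  refine ⟨fun h => ?_, fun h => by simp only [firstIndex, h]⟩
  rw [← apply_firstIndex f k, h, apply_firstIndex f k']

theorem firstIndex_firstIndex (f : ι → α) (k : ι) :
    firstIndex f (firstIndex f k) = firstIndex f k :=
  firstIndex_eq_firstIndex_iff.2 (apply_firstIndex f k)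

end FirstIndex

section LabelledTuples

variable {ι β γ : Type*} [Fintype ι] [LinearOrder ι] [DecidableEq γ]
  {A : Finset β} {ℓ : β → γ} {c₀ : γ}

def leaders (ℓ : β → γ) (c₀ : γ) (t : ι → β) : Finset ι :=
  {k | ℓ (t k) ≠ c₀ ∧ firstIndex (ℓ ∘ t) k = k}

theorem two_mul_card_leaders_le {t : ι → β}
    (ht : ∀ k, ℓ (t k) ≠ c₀ → #{k' | ℓ (t k') = ℓ (t k)} ≠ 1) :
    2 * #(leaders ℓ c₀ t) ≤ Fintype.card ι := by
  have himage : ({k | ℓ (t k) ≠ c₀} : Finset ι).image (firstIndex (ℓ ∘ t)) = leaders ℓ c₀ t := by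
    ext p
    simp only [leaders, mem_image, mem_filter, mem_univ, true_and]
    constructor
    · rintro ⟨k, hk, rfl⟩
      exact ⟨by simpa using (apply_firstIndex (ℓ ∘ t) k).trans_ne hk, firstIndex_firstIndex _ _⟩
    · rintro ⟨hp, hfp⟩
      exact ⟨p, hp, hfp⟩
  rw [← himage]
  refine (mul_card_image_le_card _ 2 fun p hp => ?_).trans (card_le_univ _)
  obtain ⟨hp, hfp⟩ := mem_filter.1 (himage ▸ hp)
  have hfibre : ({k ∈ ({k | ℓ (t k) ≠ c₀} : Finset ι) | firstIndex (ℓ ∘ t) k = p} : Finset ι) =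
      ({k | ℓ (t k) = ℓ (t p)} : Finset ι) := by
    ext k
    simp only [mem_filter, mem_univ, true_and]
    constructor
    · rintro ⟨-, rfl⟩
      exact (apply_firstIndex (ℓ ∘ t) k).symm
    · intro h
      exact ⟨h ▸ hfp.1, hfp.2 ▸ firstIndex_eq_firstIndex_iff.2 h⟩
  have hpos : 0 < #({k | ℓ (t k) = ℓ (t p)} : Finset ι) := card_pos.2 ⟨p, by simp⟩
  have hne_one := ht p hfp.1
  rw [hfibre]
  omega

def codeBox (A : Finset β) (ℓ : β → γ) (c₀ : γ) (F : Finset ι) (k : ι) : Finset (β ⊕ ι × Bool) :=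
  if k ∈ F then A.disjSum ∅ else {a ∈ A | ℓ a = c₀}.disjSum (F ×ˢ univ)

theorem card_piFinset_codeBox (F : Finset ι) :
    #(Fintype.piFinset (codeBox A ℓ c₀ F)) =
      #A ^ #F * (#{a ∈ A | ℓ a = c₀} + 2 * #F) ^ (Fintype.card ι - #F) := by
  simp [Fintype.card_piFinset, codeBox, apply_ite card, prod_ite, card_disjSum, mul_comm,
    filter_notMem_eq_sdiff, card_univ_sdiff]

variable [DecidableEq β]

def labelCode (ℓ : β → γ) (c₀ : γ) (t : ι → β) (k : ι) : β ⊕ ι × Bool :=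
  if ℓ (t k) = c₀ ∨ firstIndex (ℓ ∘ t) k = k then .inl (t k)
  else .inr (firstIndex (ℓ ∘ t) k, decide (t k = t (firstIndex (ℓ ∘ t) k)))

theorem labelCode_firstIndex (t : ι → β) (k : ι) :
    labelCode ℓ c₀ t (firstIndex (ℓ ∘ t) k) = .inl (t (firstIndex (ℓ ∘ t) k)) := by
  simp [labelCode, firstIndex_firstIndex]

theorem eq_of_labelCode_eq_inl {t : ι → β} {k : ι} {b : β}
    (h : labelCode ℓ c₀ t k = .inl b) : t k = b := by
  unfold labelCode at h
  split_ifs at h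
  exact Sum.inl_injective h

theorem labelCode_eq_inr {t : ι → β} {k p : ι} {b : Bool}
    (h : labelCode ℓ c₀ t k = .inr (p, b)) : firstIndex (ℓ ∘ t) k = p ∧ (t k = t p ↔ b) := by
  unfold labelCode at h
  split_ifs at h
  simp only [Sum.inr.injEq, Prod.mk.injEq] at h
  obtain ⟨rfl, rfl⟩ := h
  simp

theorem labelCode_injOn (hfibre : ∀ c, #{a ∈ A | ℓ a = c} ≤ 2) :
    Set.InjOn (labelCode ℓ c₀) {t : ι → β | ∀ k, t k ∈ A} := by
  intro t ht t' ht' h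
  funext k
  rcases hk : labelCode ℓ c₀ t k with b | ⟨p, b⟩
  · rw [eq_of_labelCode_eq_inl hk, eq_of_labelCode_eq_inl ((congrFun h k).symm.trans hk)]
  · obtain ⟨rfl, hb⟩ := labelCode_eq_inr hk
    obtain ⟨hp, hb'⟩ := labelCode_eq_inr ((congrFun h k).symm.trans hk)
    set p := firstIndex (ℓ ∘ t) k
    have htp : t p = t' p := by
      have hcode := congrFun h p
      rw [labelCode_firstIndex, ← hp, labelCode_firstIndex, hp] at hcode
      exact Sum.inl_injective hcode
    have hℓ : ℓ (t k) = ℓ (t p) := (apply_firstIndex (ℓ ∘ t) k).symm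
    have hℓ' : ℓ (t' k) = ℓ (t p) := by
      rw [htp, ← hp]
      exact (apply_firstIndex (ℓ ∘ t') k).symm
    cases b
    · by_contra hne
      refine (hfibre (ℓ (t p))).not_gt (two_lt_card.2 ⟨t p, ?_, t k, ?_, t' k, ?_, ?_, ?_, hne⟩)
      · simpa using ht p
      · simpa [hℓ] using ht k
      · simpa [hℓ'] using ht' k
      · simpa [eq_comm] using hb
      · simpa [eq_comm, htp] using hb'
    · rw [hb.2 rfl, hb'.2 rfl, htp]

theorem labelCode_mem_piFinset {t : ι → β} (ht : ∀ k, t k ∈ A) :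
    labelCode ℓ c₀ t ∈ Fintype.piFinset (codeBox A ℓ c₀ (leaders ℓ c₀ t)) := by
  refine Fintype.mem_piFinset.2 fun k => ?_
  have hleader : ∀ p, p ∈ leaders ℓ c₀ t ↔ ℓ (t p) ≠ c₀ ∧ firstIndex (ℓ ∘ t) p = p := by
    simp [leaders]
  by_cases hk : k ∈ leaders ℓ c₀ t
  · rw [hleader] at hk
    have hcode : labelCode ℓ c₀ t k = .inl (t k) := by simp [labelCode, hk.2]
    simpa [codeBox, hleader, hk, hcode] using ht k
  · rw [codeBox, if_neg hk]
    unfold labelCode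
    split_ifs with hcode
    · rw [hleader] at hk
      have : ℓ (t k) = c₀ := by tauto
      simpa [this] using ht k
    · simp only [inr_mem_disjSum, mem_product, mem_univ, and_true, hleader, firstIndex_firstIndex]
      exact (apply_firstIndex (ℓ ∘ t) k).trans_ne (not_or.1 hcode).1

theorem card_le_sum_of_forall_label_ne_one {S : Finset (ι → β)}
    (hfibre : ∀ c, #{a ∈ A | ℓ a = c} ≤ 2)
    (hS : ∀ t ∈ S, (∀ k, t k ∈ A) ∧ ∀ k, ℓ (t k) ≠ c₀ → #{k' | ℓ (t k') = ℓ (t k)} ≠ 1) :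
    #S ≤ ∑ F ∈ (univ : Finset ι).powerset with 2 * #F ≤ Fintype.card ι,
        #A ^ #F * (#{a ∈ A | ℓ a = c₀} + 2 * #F) ^ (Fintype.card ι - #F) := by
  calc #S ≤ #((univ.powerset.filter fun F : Finset ι => 2 * #F ≤ Fintype.card ι).biUnion
          fun F => Fintype.piFinset (codeBox A ℓ c₀ F)) := by
        refine card_le_card_of_injOn (labelCode ℓ c₀) (fun t ht => ?_)
          ((labelCode_injOn hfibre).mono fun t ht => (hS t ht).1)
        exact mem_biUnion.2 ⟨leaders ℓ c₀ t, by simpa using two_mul_card_leaders_le (hS t ht).2,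
          labelCode_mem_piFinset (hS t ht).1⟩
    _ ≤ _ := card_biUnion_le.trans (sum_le_sum fun F _ => (card_piFinset_codeBox F).le)

end LabelledTuples

theorem Finset.sum_powerset_filter_card {α M : Type*} [AddCommMonoid M] (P : ℕ → Prop)
    [DecidablePred P] (g : ℕ → M) (x : Finset α) :
    ∑ F ∈ x.powerset with P #F, g #F = ∑ n ∈ range (#x + 1) with P n, (#x).choose n • g n := by
  simp only [sum_filter, ← smul_ite_zero]
  exact sum_powerset_apply_card (fun n => if P n then g n else 0)

theorem sum_choose_mul_le {d m : ℕ} (hd : 1 ≤ d) (hm : 2 ≤ m) :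
    ((∑ n ∈ range (m + 1) with 2 * n ≤ m, m.choose n • ((2 * d) ^ n * (1 + 2 * n) ^ (m - n)) : ℕ)
      : ℝ) ≤ (2 * m * √d) ^ m := by
  have hsqrt : 1 ≤ √(d : ℝ) := Real.one_le_sqrt.2 (by exact_mod_cast hd)
  have hsq : √(d : ℝ) ^ 2 = d := Real.sq_sqrt d.cast_nonneg
  rcases hm.eq_or_lt with rfl | hm
  · have : (1 : ℝ) ≤ d := by exact_mod_cast hd
    simp [sum_filter, sum_range_succ, mul_pow, hsq]
    linarith
  have hterm : ∀ n, 2 * n ≤ m →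
      (m.choose n * ((2 * d) ^ n * (1 + 2 * n) ^ (m - n)) : ℝ) ≤
        2 ^ n * (m + 1 : ℝ) ^ (m - n) * m.choose n * √d ^ m := by
    intro n hnm
    have hdn : (d : ℝ) ^ n ≤ √d ^ m := by
      simpa only [pow_mul, hsq] using pow_le_pow_right₀ hsqrt hnm
    have hbase : (1 + 2 * n : ℝ) ≤ m + 1 := by exact_mod_cast (by omega : 1 + 2 * n ≤ m + 1)
    calc (m.choose n * ((2 * d) ^ n * (1 + 2 * n) ^ (m - n)) : ℝ)
        = m.choose n * 2 ^ n * d ^ n * (1 + 2 * n) ^ (m - n) := by ring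
      _ ≤ m.choose n * 2 ^ n * √d ^ m * (m + 1) ^ (m - n) := by gcongr
      _ = _ := by ring
  calc ((∑ n ∈ range (m + 1) with 2 * n ≤ m,
          m.choose n • ((2 * d) ^ n * (1 + 2 * n) ^ (m - n)) : ℕ) : ℝ)
      ≤ ∑ n ∈ range (m + 1) with 2 * n ≤ m,
          2 ^ n * (m + 1 : ℝ) ^ (m - n) * m.choose n * √d ^ m := by
        push_cast [nsmul_eq_mul]
        exact sum_le_sum fun n hn => hterm n (mem_filter.1 hn).2
    _ ≤ ∑ n ∈ range (m + 1), 2 ^ n * (m + 1 : ℝ) ^ (m - n) * m.choose n * √d ^ m :=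
        sum_le_sum_of_subset_of_nonneg (filter_subset _ _) fun _ _ _ => by positivity
    _ = (2 + (m + 1)) ^ m * √d ^ m := by rw [add_pow, sum_mul]
    _ ≤ (2 * m) ^ m * √d ^ m := by
        gcongr
        have : (3 : ℝ) ≤ m := by exact_mod_cast hm
        linarith
    _ = (2 * m * √d) ^ m := (mul_pow _ _ _).symm

section OutsideVertices

variable {V : Type*} [DecidableEq V] {i j v : V} {e : Sym2 V}

def outsideVertices (i j : V) (e : Sym2 V) : Finset V := e.toFinset \ {i, j}

theorem mem_outsideVertices : v ∈ outsideVertices i j e ↔ v ∈ e ∧ v ≠ i ∧ v ≠ j := by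
  simp [outsideVertices]

theorem eq_or_eq_of_mem_outsideVertices (hij : i ∈ e ∨ j ∈ e) (hv : v ∈ outsideVertices i j e) :
    e = s(i, v) ∨ e = s(j, v) := by
  rw [mem_outsideVertices] at hv
  induction e using Sym2.ind
  simp only [Sym2.mem_iff, Sym2.eq_iff] at *
  grind

theorem outsideVertices_eq_singleton_iff (hij : i ∈ e ∨ j ∈ e) (hvi : v ≠ i) (hvj : v ≠ j) :
    outsideVertices i j e = {v} ↔ v ∈ e := by
  refine ⟨fun h => (mem_outsideVertices.1 (h ▸ mem_singleton_self v)).1, fun hv => ?_⟩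
  have hv' : v ∈ outsideVertices i j e := mem_outsideVertices.2 ⟨hv, hvi, hvj⟩
  ext w
  rcases eq_or_eq_of_mem_outsideVertices hij hv' with rfl | rfl <;>
    simp only [mem_outsideVertices, Sym2.mem_iff, mem_singleton] <;> grind

theorem eq_of_outsideVertices_eq_empty (he : ¬e.IsDiag) (hij : i ∈ e ∨ j ∈ e)
    (h : outsideVertices i j e = ∅) : e = s(i, j) := by
  have hall : ∀ w ∈ e, w = i ∨ w = j := fun w hw => by
    by_contra! hw'
    simpa [h] using mem_outsideVertices.2 ⟨hw, hw'⟩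
  induction e using Sym2.ind with | _ x y
  have hx := hall x (Sym2.mem_mk_left x y)
  have hy := hall y (Sym2.mem_mk_right x y)
  simp only [Sym2.mem_iff, Sym2.eq_iff, Sym2.mk_isDiag_iff] at *
  grind

end OutsideVertices

namespace SimpleGraph

variable {V : Type*} [Fintype V] [DecidableEq V] (G : SimpleGraph V) [DecidableRel G.Adj] (i j : V)

theorem card_filter_mem_edgeFinset_le :
    #{e ∈ G.edgeFinset | i ∈ e ∨ j ∈ e} ≤ G.degree i + G.degree j := by
  rw [← card_incidenceFinset_eq_degree, ← card_incidenceFinset_eq_degree]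
  refine (card_le_card fun e he => ?_).trans (card_union_le _ _)
  simpa [incidenceSet, and_or_left] using he

theorem card_filter_outsideVertices_eq_empty_le_one :
    #{e ∈ {e ∈ G.edgeFinset | i ∈ e ∨ j ∈ e} | outsideVertices i j e = ∅} ≤ 1 := by
  refine card_le_one.2 fun a ha b hb => ?_
  simp only [mem_filter, mem_edgeFinset] at ha hb
  rw [eq_of_outsideVertices_eq_empty (G.not_isDiag_of_mem_edgeSet ha.1.1) ha.1.2 ha.2,
    eq_of_outsideVertices_eq_empty (G.not_isDiag_of_mem_edgeSet hb.1.1) hb.1.2 hb.2]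

theorem card_filter_outsideVertices_eq_le_two (c : Finset V) :
    #{e ∈ {e ∈ G.edgeFinset | i ∈ e ∨ j ∈ e} | outsideVertices i j e = c} ≤ 2 := by
  rcases c.eq_empty_or_nonempty with rfl | ⟨v, hv⟩
  · exact (G.card_filter_outsideVertices_eq_empty_le_one i j).trans one_le_two
  · refine (card_le_card fun e he => ?_).trans (card_le_two (a := s(i, v)) (b := s(j, v)))
    simp only [mem_filter, mem_edgeFinset] at he
    simpa using eq_or_eq_of_mem_outsideVertices he.1.2 (he.2 ▸ hv)

theorem card_le_sum_of_forall_vertex_ne_one {m : ℕ} {S : Finset (Fin m → Sym2 V)}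
    (hS : ∀ t ∈ S, (∀ k, t k ∈ {e ∈ G.edgeFinset | i ∈ e ∨ j ∈ e}) ∧
      ∀ v, v ≠ i → v ≠ j → #{k | v ∈ t k} ≠ 1) :
    #S ≤ ∑ F ∈ (univ : Finset (Fin m)).powerset with 2 * #F ≤ m,
        (G.degree i + G.degree j) ^ #F * (1 + 2 * #F) ^ (m - #F) := by
  have hlabels : ∀ t ∈ S, ∀ k, outsideVertices i j (t k) ≠ ∅ →
      #{k' | outsideVertices i j (t k') = outsideVertices i j (t k)} ≠ 1 := by
    intro t ht k hk
    obtain ⟨v, hv⟩ := nonempty_iff_ne_empty.2 hk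
    obtain ⟨hvk, hvi, hvj⟩ := mem_outsideVertices.1 hv
    have hsingle : ∀ k, outsideVertices i j (t k) = {v} ↔ v ∈ t k := fun k =>
      outsideVertices_eq_singleton_iff (mem_filter.1 ((hS t ht).1 k)).2 hvi hvj
    simpa only [(hsingle k).2 hvk, hsingle] using (hS t ht).2 v hvi hvj
  have hcount := card_le_sum_of_forall_label_ne_one (c₀ := ∅)
    (G.card_filter_outsideVertices_eq_le_two i j) fun t ht => ⟨(hS t ht).1, hlabels t ht⟩
  rw [Fintype.card_fin] at hcount
  refine hcount.trans (sum_le_sum fun F _ => ?_)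
  gcongr
  · exact G.card_filter_mem_edgeFinset_le i j
  · exact G.card_filter_outsideVertices_eq_empty_le_one i j

end SimpleGraph

open scoped Classical in
theorem stmt0 {V : Type*} [Fintype V] [DecidableEq V]
    (G : SimpleGraph V) [DecidableRel G.Adj] (d : ℕ)
    (hd : ∀ v : V, G.degree v ≤ d)
    (i j : V) (hij : G.Adj i j) (m : ℕ) (hm : 2 ≤ m)
    (Nij : Finset (Sym2 V))
    (hNij : Nij = G.edgeFinset.filter (fun e => i ∈ e ∨ j ∈ e)) :
    (((Finset.univ : Finset (Fin m → Sym2 V)).filter (fun t =>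
        (∀ k, t k ∈ Nij) ∧
        ∀ v : V, v ≠ i → v ≠ j →
          (Finset.univ.filter (fun k => v ∈ t k)).card ≠ 1)).card : ℝ)
      ≤ (2 * m * Real.sqrt d) ^ m := by
  subst hNij
  have hd1 : 1 ≤ d := ((G.degree_pos_iff_exists_adj i).2 ⟨j, hij⟩).trans_le (hd i)
  calc _ ≤ ((∑ F ∈ (univ : Finset (Fin m)).powerset with 2 * #F ≤ m,
          (2 * d) ^ #F * (1 + 2 * #F) ^ (m - #F) : ℕ) : ℝ) := by
        refine Nat.cast_le.2 ((G.card_le_sum_of_forall_vertex_ne_one i j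
          fun t ht => (mem_filter.1 ht).2).trans (sum_le_sum fun F _ => ?_))
        gcongr
        linarith [hd i, hd j]
    _ = ((∑ n ∈ range (m + 1) with 2 * n ≤ m,
          m.choose n • ((2 * d) ^ n * (1 + 2 * n) ^ (m - n)) : ℕ) : ℝ) := by
        rw [sum_powerset_filter_card (2 * · ≤ m) fun n => (2 * d) ^ n * (1 + 2 * n) ^ (m - n)]
        simp
    _ ≤ _ := sum_choose_mul_le hd1 hm
end

section
/- Let G be a graph of maximum degree d with edge {i,j}, and let m ≥ 2. The number of ordered m-tuples of edges in N_ij^m that do not contain the edge {i,j} and in which every vertex of V \ {i,j} that appears, appears at least twice, is at most 2^m · (m/2)^m · (2d)^{m/2}. -/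
/-!
Every edge of an admissible tuple is `s(u, w)` with `u ∈ {i, j}` and `w ∈ N(i) ∪ N(j)` outside
`{i, j}`, so the tuple is determined by its sides `u : Fin m → {i, j}` (`2 ^ m` choices) and its
outer endpoints `w`. Each outer endpoint occurs at least twice, so `w` takes at most `m / 2`
values and factors through `Fin (m / 2)`, leaving `(m / 2) ^ m * (2 * d) ^ (m / 2)` choices.
-/

open Finset

theorem Finset.card_filter_piFinset_card_image_le {α β : Type*} [Fintype α] [DecidableEq α]
    [DecidableEq β] {S : Finset β} (hS : S.Nonempty) (h : ℕ) :
    #{f ∈ Fintype.piFinset (fun _ : α => S) | #(univ.image f) ≤ h} ≤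
      h ^ Fintype.card α * #S ^ h := by
  obtain ⟨s₀, hs₀⟩ := hS
  have hsub : {f ∈ Fintype.piFinset (fun _ : α => S) | #(univ.image f) ≤ h} ⊆
      image₂ (fun (p : α → Fin h) (g : Fin h → β) => g ∘ p) univ
        (Fintype.piFinset fun _ => S) := by
    intro f hf
    simp only [mem_filter, Fintype.mem_piFinset] at hf
    obtain ⟨hfS, hcard⟩ := hf
    set T := univ.image f
    let e : T → Fin h := Fin.castLE hcard ∘ T.equivFin
    have he : Function.Injective e := (Fin.castLE_injective hcard).comp T.equivFin.injective
    refine mem_image₂.2 ⟨fun a => e ⟨f a, mem_image_of_mem f (mem_univ a)⟩, mem_univ _,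
      Function.extend e Subtype.val fun _ => s₀, ?_, ?_⟩
    · rw [Fintype.mem_piFinset]
      intro x
      by_cases hx : ∃ y, e y = x
      · obtain ⟨⟨y, hy⟩, rfl⟩ := hx
        obtain ⟨a, -, rfl⟩ := mem_image.1 hy
        rw [he.extend_apply]
        exact hfS a
      · rwa [Function.extend_apply' _ _ _ hx]
    · funext a
      exact he.extend_apply _ _ _
  calc _ ≤ #(image₂ (fun (p : α → Fin h) (g : Fin h → β) => g ∘ p) univ
        (Fintype.piFinset fun _ => S)) := card_le_card hsub
    _ ≤ _ := card_image₂_le _ _ _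
    _ = _ := by simp

namespace SimpleGraph

variable {V : Type*} (G : SimpleGraph V)

theorem exists_eq_mk_of_incident {i j : V} {e : Sym2 V} (he : e ∈ G.edgeSet)
    (hij : i ∈ e ∨ j ∈ e) (hne : e ≠ s(i, j)) :
    ∃ u ∈ ({i, j} : Set V), ∃ v, v ≠ i ∧ v ≠ j ∧ G.Adj u v ∧ e = s(u, v) := by
  rcases hij with hi | hj
  · obtain ⟨v, rfl⟩ := Sym2.mem_iff_exists.1 hi
    refine ⟨i, .inl rfl, v, (G.ne_of_adj he).symm, ?_, he, rfl⟩
    rintro rfl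
    exact hne rfl
  · obtain ⟨v, rfl⟩ := Sym2.mem_iff_exists.1 hj
    refine ⟨j, .inr rfl, v, ?_, (G.ne_of_adj he).symm, he, rfl⟩
    rintro rfl
    exact hne Sym2.eq_swap

variable [Fintype V] [DecidableEq V] [DecidableRel G.Adj]

theorem card_neighborFinset_union_le {d : ℕ} (hd : ∀ v, G.degree v ≤ d) (i j : V) :
    #(G.neighborFinset i ∪ G.neighborFinset j) ≤ 2 * d :=
  calc _ ≤ G.degree i + G.degree j := card_union_le _ _
    _ ≤ 2 * d := by linarith [hd i, hd j]

theorem exists_endpoints_of_incident {α : Type*} [Fintype α] {i j : V}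
    (t : α → Sym2 V) (hinc : ∀ k, t k ∈ G.edgeSet ∧ (i ∈ t k ∨ j ∈ t k))
    (hne : ∀ k, t k ≠ s(i, j))
    (htwice : ∀ v, v ≠ i → v ≠ j → (univ.filter fun k => v ∈ t k).Nonempty →
      2 ≤ #(univ.filter fun k => v ∈ t k)) :
    ∃ u w : α → V, (∀ k, u k ∈ ({i, j} : Finset V)) ∧
      (∀ k, w k ∈ G.neighborFinset i ∪ G.neighborFinset j) ∧
      2 * #(univ.image w) ≤ Fintype.card α ∧ t = fun k => s(u k, w k) := by
  choose u hu w hwi hwj hadj ht using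
    fun k => G.exists_eq_mk_of_incident (hinc k).1 (hinc k).2 (hne k)
  have hmem : ∀ v, v ≠ i → v ≠ j → ∀ k, v ∈ t k ↔ w k = v := by
    intro v hvi hvj k
    obtain huk | huk : u k = i ∨ u k = j := hu k <;> simp [ht k, huk, hvi, hvj, eq_comm]
  refine ⟨u, w, fun k => by simpa using hu k, fun k => ?_, ?_, funext ht⟩
  · have hadjk := hadj k
    obtain huk | huk : u k = i ∨ u k = j := hu k <;> rw [huk] at hadjk <;> simp [hadjk]
  · rw [← card_univ]
    refine mul_card_image_le_card _ _ fun v hv => ?_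
    obtain ⟨k, -, rfl⟩ := mem_image.1 hv
    have hfiber : (univ.filter fun k' => w k ∈ t k') = univ.filter fun k' => w k' = w k :=
      filter_congr fun k' _ => hmem _ (hwi k) (hwj k) k'
    rw [← hfiber]
    exact htwice _ (hwi k) (hwj k) ⟨k, by simp [hfiber]⟩

end SimpleGraph

theorem pow_div_two_le_rpow_div_two {x : ℝ} (hx : 1 ≤ x) (m : ℕ) :
    x ^ (m / 2) ≤ x ^ ((m : ℝ) / 2) := by
  rw [← Real.rpow_natCast]
  exact Real.rpow_le_rpow_of_exponent_le hx Nat.cast_div_le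

open scoped Classical in
theorem stmt1_general {V : Type*} [Fintype V] [DecidableEq V]
    (G : SimpleGraph V) [DecidableRel G.Adj] (d : ℕ)
    (hd : ∀ v : V, G.degree v ≤ d)
    (i j : V) (hij : G.Adj i j) (m : ℕ)
    (Nij : Finset (Sym2 V))
    (hNij : Nij = G.edgeFinset.filter (fun e => i ∈ e ∨ j ∈ e)) :
    (((Finset.univ : Finset (Fin m → Sym2 V)).filter (fun t =>
        (∀ k, t k ∈ Nij) ∧
        (∀ k, t k ≠ s(i, j)) ∧
        ∀ v : V, v ≠ i → v ≠ j →
          (Finset.univ.filter (fun k => v ∈ t k)).Nonempty →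
            2 ≤ (Finset.univ.filter (fun k => v ∈ t k)).card)).card : ℝ)
      ≤ 2 ^ m * ((m : ℝ) / 2) ^ m * (2 * (d : ℝ)) ^ ((m : ℝ) / 2) := by
  subst hNij
  set S := G.neighborFinset i ∪ G.neighborFinset j
  have hjS : j ∈ S := mem_union_left _ ((G.mem_neighborFinset i j).2 hij)
  have hd1 : (1 : ℝ) ≤ 2 * d := by
    exact_mod_cast (card_pos.2 ⟨j, hjS⟩).trans_le (G.card_neighborFinset_union_le hd i j)
  calc _ ≤ (#(image₂ (fun (u w : Fin m → V) k => s(u k, w k))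
        (Fintype.piFinset fun _ => {i, j})
        {w ∈ Fintype.piFinset (fun _ => S) | #(univ.image w) ≤ m / 2}) : ℝ) := by
        refine Nat.cast_le.2 (card_le_card fun t ht => ?_)
        simp only [mem_filter, mem_univ, true_and, SimpleGraph.mem_edgeFinset] at ht
        obtain ⟨u, w, hu, hw, hcard, rfl⟩ := G.exists_endpoints_of_incident t ht.1 ht.2.1 ht.2.2
        refine mem_image₂.2 ⟨u, Fintype.mem_piFinset.2 hu, w,
          mem_filter.2 ⟨Fintype.mem_piFinset.2 hw, ?_⟩, rfl⟩
        rw [Fintype.card_fin] at hcard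
        omega
    _ ≤ (2 ^ m * ((m / 2) ^ m * (2 * d) ^ (m / 2)) : ℕ) := by
        refine Nat.cast_le.2 ((card_image₂_le _ _ _).trans ?_)
        gcongr
        · simp [card_pair hij.ne]
        · refine (card_filter_piFinset_card_image_le ⟨j, hjS⟩ _).trans ?_
          simp only [Fintype.card_fin]
          gcongr
          exact G.card_neighborFinset_union_le hd i j
    _ ≤ _ := by
        push_cast
        rw [← mul_assoc]
        gcongr
        · exact Nat.cast_div_le
        · exact pow_div_two_le_rpow_div_two hd1 m

open scoped Classical in
theorem stmt1 {V : Type*} [Fintype V] [DecidableEq V]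
    (G : SimpleGraph V) [DecidableRel G.Adj] (d : ℕ)
    (hd : ∀ v : V, G.degree v ≤ d)
    (i j : V) (hij : G.Adj i j) (m : ℕ) (hm : 2 ≤ m)
    (Nij : Finset (Sym2 V))
    (hNij : Nij = G.edgeFinset.filter (fun e => i ∈ e ∨ j ∈ e)) :
    (((Finset.univ : Finset (Fin m → Sym2 V)).filter (fun t =>
        (∀ k, t k ∈ Nij) ∧
        (∀ k, t k ≠ s(i, j)) ∧
        ∀ v : V, v ≠ i → v ≠ j →
          (Finset.univ.filter (fun k => v ∈ t k)).Nonempty →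
            2 ≤ (Finset.univ.filter (fun k => v ∈ t k)).card)).card : ℝ)
      ≤ 2 ^ m * ((m : ℝ) / 2) ^ m * (2 * (d : ℝ)) ^ ((m : ℝ) / 2) :=
  stmt1_general G d hd i j hij m Nij hNij
end

section
/- Let H be a Hermitian matrix on (ℂ²)^⊗n that is a sum over edges {i,j} of a graph of terms h_ij acting only on qubits i and j, and let |v⟩ = |0^n⟩. Then the variance Var_v(H) = ⟨0^n|H²|0^n⟩ − ⟨0^n|H|0^n⟩² equals ⟨0^n|H Q₁ H|0^n⟩ + ⟨0^n|H Q₂ H|0^n⟩, where Q_t is the orthogonal projector onto the span of computational basis states of Hamming weight t. -/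
/-
Expanding `⟨0ⁿ|H²|0ⁿ⟩ = ∑ₓ ⟨0ⁿ|H|x⟩⟨x|H|0ⁿ⟩` over the computational basis, the summand `x = 0ⁿ`
is `⟨0ⁿ|H|0ⁿ⟩²`. Each `h_ij` can only flip qubits `i` and `j` of `|0ⁿ⟩`, so `⟨x|H|0ⁿ⟩ = 0` once `x`
has Hamming weight above two; the remaining summands, of weight one and two, are those of
`⟨0ⁿ|H Q₁ H|0ⁿ⟩ + ⟨0ⁿ|H Q₂ H|0ⁿ⟩`.
-/

open Matrix

/-- An n-qubit matrix acting nontrivially only on qubits `i` and `j`. -/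
def IsTwoLocal {n : ℕ} (i j : Fin n)
    (h : Matrix (Fin n → Fin 2) (Fin n → Fin 2) ℂ) : Prop :=
  ∃ h' : Matrix (Fin 2 × Fin 2) (Fin 2 × Fin 2) ℂ,
    ∀ x y, h x y =
      if ∀ k, k ≠ i → k ≠ j → x k = y k
      then h' (x i, x j) (y i, y j) else 0

open Finset

theorem Matrix.mul_diagonal_indicator_mul_apply {ι R : Type*} [Fintype ι] [DecidableEq ι]
    [Semiring R] (p : ι → Prop) [DecidablePred p] (A B : Matrix ι ι R) (i j : ι) :
    (A * diagonal (fun x => if p x then (1 : R) else 0) * B) i j =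
      ∑ x with p x, A i x * B x j := by
  rw [mul_apply, sum_filter]
  refine sum_congr rfl fun x _ => ?_
  rw [mul_diagonal, mul_ite, mul_one, mul_zero, ite_mul, zero_mul]

section HammingNorm

variable {ι β : Type*} [Fintype ι] [Zero β] [DecidableEq β]

theorem hammingNorm_le_card_of_eq_zero_of_notMem {x : ι → β} (s : Finset ι)
    (hx : ∀ k ∉ s, x k = 0) : hammingNorm x ≤ #s :=
  card_le_card fun k hk => by
    by_contra hks
    simp [hx k hks] at hk

theorem sum_eq_apply_zero_add_sum_hammingNorm_one_add_sum_hammingNorm_two [DecidableEq ι]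
    [Fintype β] {M : Type*} [AddCommMonoid M] (f : (ι → β) → M)
    (hf : ∀ x, 2 < hammingNorm x → f x = 0) :
    ∑ x, f x = f 0 + ∑ x with hammingNorm x = 1, f x + ∑ x with hammingNorm x = 2, f x := by
  have hsplit : ∀ x, f x = (if x = 0 then f x else 0) + (if hammingNorm x = 1 then f x else 0)
      + (if hammingNorm x = 2 then f x else 0) := by
    intro x
    obtain h0 | h1 | h2 | hlt : hammingNorm x = 0 ∨ hammingNorm x = 1 ∨ hammingNorm x = 2 ∨
        2 < hammingNorm x := by omega
    · obtain rfl := hammingNorm_eq_zero.mp h0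
      simp
    · simp [h1, ← hammingNorm_eq_zero]
    · simp [h2, ← hammingNorm_eq_zero]
    · simp [hf x hlt]
  rw [sum_congr rfl fun x _ => hsplit x, sum_add_distrib, sum_add_distrib, sum_ite_eq',
    sum_filter, sum_filter, if_pos (mem_univ _)]

end HammingNorm

theorem card_filter_eq_one_eq_hammingNorm {ι : Type*} [Fintype ι] (x : ι → Fin 2) :
    #{k | x k = 1} = hammingNorm x :=
  congrArg card <| filter_congr fun k _ => show x k = 1 ↔ x k ≠ (0 : Fin 2) by omega

theorem IsTwoLocal.apply_zero_eq_zero {n : ℕ} {i j : Fin n}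
    {h : Matrix (Fin n → Fin 2) (Fin n → Fin 2) ℂ} (hh : IsTwoLocal i j h) {x : Fin n → Fin 2}
    (hx : 2 < hammingNorm x) : h x 0 = 0 := by
  obtain ⟨h', hh'⟩ := hh
  have hsupp : ¬∀ k, k ≠ i → k ≠ j → x k = 0 := fun hzero =>
    ((hammingNorm_le_card_of_eq_zero_of_notMem {i, j} fun k hk => by
      simp only [mem_insert, mem_singleton, not_or] at hk
      exact hzero k hk.1 hk.2).trans card_le_two).not_gt hx
  rw [hh']
  exact if_neg hsupp

theorem stmt5_general {n : ℕ} {E : Type*} [Fintype E]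
    (a b : E → Fin n)
    (h : E → Matrix (Fin n → Fin 2) (Fin n → Fin 2) ℂ)
    (hloc : ∀ e, IsTwoLocal (a e) (b e) (h e))
    (H : Matrix (Fin n → Fin 2) (Fin n → Fin 2) ℂ)
    (hH : H = ∑ e, h e)
    (Q : ℕ → Matrix (Fin n → Fin 2) (Fin n → Fin 2) ℂ)
    (hQ : ∀ t x y, Q t x y =
      if x = y ∧ (Finset.univ.filter fun k => x k = 1).card = t then 1 else 0)
    (z : Fin n → Fin 2) (hz : z = fun _ => 0) :
    (H * H) z z - (H z z) ^ 2 = (H * Q 1 * H) z z + (H * Q 2 * H) z z := by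
  obtain rfl : z = 0 := hz
  have hQ_diag : ∀ t, Q t = diagonal fun x => if hammingNorm x = t then 1 else 0 := fun t => by
    ext x y
    rw [hQ, diagonal_apply, ite_and, card_filter_eq_one_eq_hammingNorm]
  have hH_vanish : ∀ x, 2 < hammingNorm x → H x 0 = 0 := fun x hx => by
    rw [hH, Matrix.sum_apply]
    exact sum_eq_zero fun e _ => (hloc e).apply_zero_eq_zero hx
  rw [mul_apply, sum_eq_apply_zero_add_sum_hammingNorm_one_add_sum_hammingNorm_two _
      fun x hx => by rw [hH_vanish x hx, mul_zero],
    hQ_diag, hQ_diag, mul_diagonal_indicator_mul_apply, mul_diagonal_indicator_mul_apply]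
  ring

theorem stmt5 {n : ℕ} {E : Type*} [Fintype E]
    (a b : E → Fin n) (hab : ∀ e, a e ≠ b e)
    (h : E → Matrix (Fin n → Fin 2) (Fin n → Fin 2) ℂ)
    (hherm : ∀ e, (h e).IsHermitian)
    (hloc : ∀ e, IsTwoLocal (a e) (b e) (h e))
    (H : Matrix (Fin n → Fin 2) (Fin n → Fin 2) ℂ)
    (hH : H = ∑ e, h e)
    (Q : ℕ → Matrix (Fin n → Fin 2) (Fin n → Fin 2) ℂ)
    (hQ : ∀ t x y, Q t x y =
      if x = y ∧ (Finset.univ.filter fun k => x k = 1).card = t then 1 else 0)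
    (z : Fin n → Fin 2) (hz : z = fun _ => 0) :
    (H * H) z z - (H z z) ^ 2 = (H * Q 1 * H) z z + (H * Q 2 * H) z z :=
  stmt5_general a b h hloc H hH Q hQ z hz
end

section
/- For any reals κ and uniformly random independent μ₁, μ₂ ∈ [0, π/2], the expectation E|sin(μ₁ + μ₂ + κ)| = (4/π²) ∫₀^{π/2} ∫₀^{π/2} |sin(μ₁ + μ₂ + κ)| dμ₁ dμ₂ ≥ 2/5. -/
/-!
For `|s| ≤ 1`,
`5 |s| - (13 s² - 16 s⁴ + 8 s⁶) = |s| (1 - |s|) (8 (|s|² + |s|/2 - 3/4)² + 2 (|s| - 1/2)²) ≥ 0`,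
and for `s = sin t` one has `13 s² - 16 s⁴ + 8 s⁶ = 5 p t` with
`p t = 3/5 - 9/20 cos 2t - 1/10 cos 4t - 1/20 cos 6t`; hence `p ≤ |sin|`.
A second antiderivative of `p` makes its integral over the square explicit: the `cos 4t` term
drops out, and the mean of `p (x + y + κ)` over `[0, π/2]²` is
`3/5 + 9/(5π²) cos 2κ + 1/(45π²) cos 6κ ≥ 3/5 - 82/(45π²) > 2/5`.
-/

open Real intervalIntegral

lemma sextic_le_five_mul_abs {u : ℝ} (hu : |u| ≤ 1) :
    13 * u ^ 2 - 16 * u ^ 4 + 8 * u ^ 6 ≤ 5 * |u| := by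
  have hfactor : 5 * |u| - (13 * u ^ 2 - 16 * u ^ 4 + 8 * u ^ 6) =
      |u| * (1 - |u|) * (8 * (|u| ^ 2 + |u| / 2 - 3 / 4) ^ 2 + 2 * (|u| - 1 / 2) ^ 2) := by
    rw [show u ^ 4 = (u ^ 2) ^ 2 by ring, show u ^ 6 = (u ^ 2) ^ 3 by ring, ← sq_abs u]
    ring
  rw [← sub_nonneg, hfactor]
  exact mul_nonneg (mul_nonneg (abs_nonneg u) (by linarith)) (by positivity)

noncomputable def absSinMinorant (t : ℝ) : ℝ :=
  3 / 5 - 9 / 20 * cos (2 * t) - 1 / 10 * cos (4 * t) - 1 / 20 * cos (6 * t)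

lemma absSinMinorant_eq (t : ℝ) :
    absSinMinorant t = (13 * sin t ^ 2 - 16 * sin t ^ 4 + 8 * sin t ^ 6) / 5 := by
  have h4 : cos (4 * t) = 2 * cos (2 * t) ^ 2 - 1 := by rw [← cos_two_mul]; ring_nf
  have h6 : cos (6 * t) = 4 * cos (2 * t) ^ 3 - 3 * cos (2 * t) := by
    rw [← cos_three_mul]; ring_nf
  rw [absSinMinorant, h6, h4, cos_two_mul_eq_one_sub]
  ring

lemma absSinMinorant_le_abs_sin (t : ℝ) : absSinMinorant t ≤ |sin t| := by
  rw [absSinMinorant_eq]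
  linarith [sextic_le_five_mul_abs (abs_sin_le_one t)]

lemma integral_integral_comp_add_add_eq_of_hasDerivAt {F F' f : ℝ → ℝ}
    (hF : ∀ t, HasDerivAt F (F' t) t) (hF' : ∀ t, HasDerivAt F' (f t) t) (hf : Continuous f)
    (a b c : ℝ) :
    ∫ x in (0 : ℝ)..a, ∫ y in (0 : ℝ)..b, f (x + y + c) =
      F (a + b + c) - F (a + c) - F (b + c) + F c := by
  have hF'_cont : Continuous F' := continuous_iff_continuousAt.2 fun t => (hF' t).continuousAt
  have inner (x : ℝ) : ∫ y in (0 : ℝ)..b, f (x + y + c) = F' (x + (b + c)) - F' (x + c) := by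
    rw [integral_eq_sub_of_hasDerivAt (f := fun y => F' (x + y + c))
      (fun y _ => ((hF' (x + y + c)).comp_add_const (x + y) c).comp_const_add x y)
      ((by fun_prop : Continuous fun y => f (x + y + c)).intervalIntegrable _ _)]
    simp [add_assoc]
  have hshift (d x : ℝ) : HasDerivAt (fun z => F (z + d)) (F' (x + d)) x :=
    (hF (x + d)).comp_add_const x d
  simp_rw [inner]
  rw [integral_eq_sub_of_hasDerivAt (fun x _ => (hshift (b + c) x).sub (hshift c x))
      ((by fun_prop : Continuous fun x => F' (x + (b + c)) - F' (x + c)).intervalIntegrable _ _)]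
  simp only [Pi.sub_apply, zero_add, add_assoc]
  ring

lemma integral_integral_mono {f g : ℝ → ℝ → ℝ} (hf : Continuous (Function.uncurry f))
    (hg : Continuous (Function.uncurry g)) (hfg : ∀ x y, f x y ≤ g x y) {a b c d : ℝ}
    (hab : a ≤ b) (hcd : c ≤ d) :
    ∫ x in a..b, ∫ y in c..d, f x y ≤ ∫ x in a..b, ∫ y in c..d, g x y :=
  integral_mono hab
    ((continuous_parametric_intervalIntegral_of_continuous' hf c d).intervalIntegrable a b)
    ((continuous_parametric_intervalIntegral_of_continuous' hg c d).intervalIntegrable a b)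
    fun x => integral_mono hcd ((hf.uncurry_left x).intervalIntegrable c d)
      ((hg.uncurry_left x).intervalIntegrable c d) (hfg x)

lemma integral_integral_absSinMinorant (κ : ℝ) :
    ∫ x in (0 : ℝ)..π / 2, ∫ y in (0 : ℝ)..π / 2, absSinMinorant (x + y + κ) =
      3 * π ^ 2 / 20 + 9 / 20 * cos (2 * κ) + 1 / 180 * cos (6 * κ) := by
  set F' : ℝ → ℝ := fun t =>
    3 / 5 * t - 9 / 40 * sin (2 * t) - 1 / 40 * sin (4 * t) - 1 / 120 * sin (6 * t)
  have hF (t : ℝ) : HasDerivAt (fun t => 3 / 10 * t ^ 2 + 9 / 80 * cos (2 * t)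
      + 1 / 160 * cos (4 * t) + 1 / 720 * cos (6 * t)) (F' t) t := by
    have hcos_mul (k : ℝ) := ((hasDerivAt_id t).const_mul k).cos
    refine (((((hasDerivAt_pow 2 t).const_mul (3 / 10)).add ((hcos_mul 2).const_mul (9 / 80))).add
      ((hcos_mul 4).const_mul (1 / 160))).add ((hcos_mul 6).const_mul (1 / 720))).congr_deriv ?_
    simp only [F', id]
    ring
  have hF' (t : ℝ) : HasDerivAt F' (absSinMinorant t) t := by
    have hsin_mul (k : ℝ) := ((hasDerivAt_id t).const_mul k).sin
    refine (((((hasDerivAt_id t).const_mul (3 / 5)).sub ((hsin_mul 2).const_mul (9 / 40))).sub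
      ((hsin_mul 4).const_mul (1 / 40))).sub ((hsin_mul 6).const_mul (1 / 120))).congr_deriv ?_
    simp only [absSinMinorant, id]
    ring
  rw [integral_integral_comp_add_add_eq_of_hasDerivAt hF hF' (by unfold absSinMinorant; fun_prop)]
  have hcos_shift (k : ℝ) (m : ℕ) (d : ℝ) (hd : d = k * κ + m * π) :
      cos d = (-1) ^ m * cos (k * κ) := by
    rw [hd, cos_add_nat_mul_pi]
  rw [hcos_shift 2 2 (2 * (π / 2 + π / 2 + κ)) (by push_cast; ring),
    hcos_shift 4 4 (4 * (π / 2 + π / 2 + κ)) (by push_cast; ring),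
    hcos_shift 6 6 (6 * (π / 2 + π / 2 + κ)) (by push_cast; ring),
    hcos_shift 2 1 (2 * (π / 2 + κ)) (by push_cast; ring),
    hcos_shift 4 2 (4 * (π / 2 + κ)) (by push_cast; ring),
    hcos_shift 6 3 (6 * (π / 2 + κ)) (by push_cast; ring)]
  ring

theorem stmt13 (κ : ℝ) :
    2 / 5 ≤ (4 / Real.pi ^ 2) *
      ∫ x in (0 : ℝ)..(Real.pi / 2),
        ∫ y in (0 : ℝ)..(Real.pi / 2), |Real.sin (x + y + κ)| := by
  have hmono := integral_integral_mono (f := fun x y => absSinMinorant (x + y + κ))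
    (g := fun x y => |sin (x + y + κ)|) (by unfold absSinMinorant; fun_prop) (by fun_prop)
    (fun x y => absSinMinorant_le_abs_sin _) (by positivity : (0 : ℝ) ≤ π / 2)
    (by positivity : (0 : ℝ) ≤ π / 2)
  rw [integral_integral_absSinMinorant] at hmono
  have hπ : 3.14 < π := pi_gt_d2
  rw [div_mul_eq_mul_div, le_div_iff₀ (by positivity)]
  nlinarith [neg_one_le_cos (2 * κ), neg_one_le_cos (6 * κ)]
end

section
/- For a Haar-random single-qubit unitary U, the twirl ∫ (U† ⊗ U†) M (U ⊗ U) dU of any operator M on ℂ²⊗ℂ² lies in the span of {I⊗I, S}, where S is the swap. Consequently, for Hermitian h on two qubits and independent Haar-random U, V on the two factors, ∫ |⟨v_i^⊥, v_j^⊥| h |v_i, v_j⟩|² dv_i dv_j = (4/9) ∑_{x≥1,y≥1} f_{xy}², with |v⟩ = U|0⟩, |v^⊥⟩ = U|1⟩ and f_{xy} the Pauli coefficients of h. -/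
open Matrix Kronecker MeasureTheory

noncomputable def pauli : Fin 4 → Matrix (Fin 2) (Fin 2) ℂ
  | 0 => 1
  | 1 => !![0, 1; 1, 0]
  | 2 => !![0, -Complex.I; Complex.I, 0]
  | 3 => !![1, 0; 0, -1]

noncomputable instance : MeasurableSpace (Matrix (Fin 2) (Fin 2) ℂ) := MeasurableSpace.pi

noncomputable instance : MeasurableSpace (Matrix.unitaryGroup (Fin 2) ℂ) :=
  Subtype.instMeasurableSpace

namespace Stmt15

abbrev uG := Matrix.unitaryGroup (Fin 2) ℂ
abbrev Idx := (Fin 2) × (Fin 2)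

noncomputable def Sw : Matrix Idx Idx ℂ := fun p q => if p.1 = q.2 ∧ p.2 = q.1 then 1 else 0

local notation "conj'" => starRingEnd ℂ

lemma coe_mul (g U : uG) : ((g*U : uG) : Matrix (Fin 2) (Fin 2) ℂ)
    = (g : Matrix (Fin 2) (Fin 2) ℂ) * (U : Matrix (Fin 2) (Fin 2) ℂ) := rfl

lemma UhU (U : uG) (i j : Fin 2) :
    ∑ k, conj' ((U : Matrix (Fin 2) (Fin 2) ℂ) k i) * (U : Matrix (Fin 2) (Fin 2) ℂ) k j
      = if i = j then 1 else 0 := by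
  have h := U.2.1
  rw [Matrix.star_eq_conjTranspose] at h
  have := congrFun (congrFun h i) j
  simpa [Matrix.mul_apply, Matrix.conjTranspose_apply, Matrix.one_apply] using this

lemma abs_entry_le (U : uG) (i j : Fin 2) :
    ‖(U : Matrix (Fin 2) (Fin 2) ℂ) i j‖ ≤ 1 := by
  have h := U.2.2
  rw [Matrix.star_eq_conjTranspose] at h
  have h2 := congrFun (congrFun h i) i
  simp only [Matrix.mul_apply, Matrix.conjTranspose_apply, Matrix.one_apply_eq,
    Fin.sum_univ_two] at h2
  have h3 : Complex.normSq ((U : Matrix (Fin 2) (Fin 2) ℂ) i 0)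
      + Complex.normSq ((U : Matrix (Fin 2) (Fin 2) ℂ) i 1) = 1 := by
    have := congrArg Complex.re h2
    simpa [Complex.mul_conj] using this
  have hj : j = 0 ∨ j = 1 := by fin_cases j <;> simp
  have hns : Complex.normSq ((U : Matrix (Fin 2) (Fin 2) ℂ) i j) ≤ 1 := by
    rcases hj with rfl | rfl <;>
      nlinarith [Complex.normSq_nonneg ((U : Matrix (Fin 2) (Fin 2) ℂ) i 0),
        Complex.normSq_nonneg ((U : Matrix (Fin 2) (Fin 2) ℂ) i 1)]
  have habs : ‖(U : Matrix (Fin 2) (Fin 2) ℂ) i j‖ ^ 2 ≤ 1 := by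
    rw [Complex.sq_norm]; exact hns
  nlinarith [norm_nonneg ((U : Matrix (Fin 2) (Fin 2) ℂ) i j)]

lemma meas_ent (i j : Fin 2) : Measurable fun U : uG => (U : Matrix (Fin 2) (Fin 2) ℂ) i j :=
  (measurable_pi_apply _).comp ((measurable_pi_apply _).comp measurable_subtype_coe)

lemma meas_mulLeft (g : uG) : Measurable fun U : uG => g * U := by
  apply Measurable.subtype_mk
  apply measurable_pi_lambda
  intro i
  apply measurable_pi_lambda
  intro j
  have : (fun U : uG => ((g*U : uG) : Matrix (Fin 2) (Fin 2) ℂ) i j)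
      = fun U : uG => ∑ k, (g : Matrix (Fin 2) (Fin 2) ℂ) i k
        * (U : Matrix (Fin 2) (Fin 2) ℂ) k j := by
    funext U; rw [coe_mul, Matrix.mul_apply]
  exact this ▸ (Finset.univ.measurable_sum fun k _ => (meas_ent k j).const_mul _)

/-- the quadratic integrand -/
noncomputable def quad (a b p q : Idx) : uG → ℂ := fun U =>
  conj' ((U : Matrix (Fin 2) (Fin 2) ℂ) a.1 p.1 * (U : Matrix (Fin 2) (Fin 2) ℂ) a.2 p.2)
    * ((U : Matrix (Fin 2) (Fin 2) ℂ) b.1 q.1 * (U : Matrix (Fin 2) (Fin 2) ℂ) b.2 q.2)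

lemma meas_quad (a b p q : Idx) : Measurable (quad a b p q) := by
  unfold quad
  exact (Complex.continuous_conj.measurable.comp
      ((meas_ent a.1 p.1).mul (meas_ent a.2 p.2))).mul
    ((meas_ent b.1 q.1).mul (meas_ent b.2 q.2))

lemma abs_quad_le (a b p q : Idx) (U : uG) : ‖quad a b p q U‖ ≤ 1 := by
  unfold quad
  simp only [norm_mul, Complex.norm_conj]
  have h1 := abs_entry_le U a.1 p.1
  have h2 := abs_entry_le U a.2 p.2
  have h3 := abs_entry_le U b.1 q.1
  have h4 := abs_entry_le U b.2 q.2
  have n1 := norm_nonneg ((U : Matrix (Fin 2) (Fin 2) ℂ) a.1 p.1)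
  have n2 := norm_nonneg ((U : Matrix (Fin 2) (Fin 2) ℂ) a.2 p.2)
  have n3 := norm_nonneg ((U : Matrix (Fin 2) (Fin 2) ℂ) b.1 q.1)
  have n4 := norm_nonneg ((U : Matrix (Fin 2) (Fin 2) ℂ) b.2 q.2)
  exact mul_le_one₀ (mul_le_one₀ h1 n2 h2) (mul_nonneg n3 n4) (mul_le_one₀ h3 n4 h4)

section Meas

variable (μ : Measure uG) [IsProbabilityMeasure μ]

lemma integrable_bdd {φ : uG → ℂ} (hm : Measurable φ) {C : ℝ}
    (hb : ∀ U, ‖φ U‖ ≤ C) : Integrable φ μ := by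
  refine (integrable_const C).mono' hm.aestronglyMeasurable ?_
  filter_upwards with U
  simpa using hb U

lemma integrable_quad (a b p q : Idx) : Integrable (quad a b p q) μ :=
  integrable_bdd μ (meas_quad a b p q) (abs_quad_le a b p q)

/-- the moment tensor -/
noncomputable def K (a b p q : Idx) : ℂ := ∫ U, quad a b p q U ∂μ

omit [IsProbabilityMeasure μ] in
lemma intg_comp (hinv : ∀ g : uG, μ.map (fun U => g * U) = μ) (g : uG) {φ : uG → ℂ} (hm : Measurable φ) :
    ∫ U, φ U ∂μ = ∫ U, φ (g * U) ∂μ := by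
  conv_lhs => rw [← hinv g]
  exact integral_map (meas_mulLeft g).aemeasurable hm.aestronglyMeasurable

/-- pointwise expansion of quad composed with left translation -/
lemma quad_mul (g U : uG) (a b p q : Idx) :
    quad a b p q (g * U) = ∑ k : Idx, ∑ l : Idx,
      (conj' ((g : Matrix (Fin 2) (Fin 2) ℂ) a.1 k.1 * (g : Matrix (Fin 2) (Fin 2) ℂ) a.2 k.2)
        * ((g : Matrix (Fin 2) (Fin 2) ℂ) b.1 l.1 * (g : Matrix (Fin 2) (Fin 2) ℂ) b.2 l.2))
      * quad k l p q U := by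
  unfold quad
  simp only [coe_mul, Matrix.mul_apply, Fintype.sum_prod_type, Fin.sum_univ_two,
    _root_.map_add, _root_.map_mul]
  ring

lemma Kinv (hinv : ∀ g : uG, μ.map (fun U => g * U) = μ) (g : uG) (a b p q : Idx) : K μ a b p q = ∑ k : Idx, ∑ l : Idx,
    (conj' ((g : Matrix (Fin 2) (Fin 2) ℂ) a.1 k.1 * (g : Matrix (Fin 2) (Fin 2) ℂ) a.2 k.2)
      * ((g : Matrix (Fin 2) (Fin 2) ℂ) b.1 l.1 * (g : Matrix (Fin 2) (Fin 2) ℂ) b.2 l.2))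
    * K μ k l p q := by
  have h1 : K μ a b p q = ∫ U, quad a b p q (g * U) ∂μ :=
    intg_comp μ hinv g (meas_quad a b p q)
  rw [h1]
  have h2 : ∀ U : uG, quad a b p q (g * U) = ∑ k : Idx, ∑ l : Idx,
      (conj' ((g : Matrix (Fin 2) (Fin 2) ℂ) a.1 k.1 * (g : Matrix (Fin 2) (Fin 2) ℂ) a.2 k.2)
        * ((g : Matrix (Fin 2) (Fin 2) ℂ) b.1 l.1 * (g : Matrix (Fin 2) (Fin 2) ℂ) b.2 l.2))
      * quad k l p q U := fun U => quad_mul g U a b p q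
  rw [integral_congr_ae (Filter.Eventually.of_forall h2)]
  rw [integral_finset_sum _ (fun k _ => ?_)]
  · refine Finset.sum_congr rfl fun k _ => ?_
    rw [integral_finset_sum _ (fun l _ => ((integrable_quad μ k l p q).const_mul _))]
    exact Finset.sum_congr rfl fun l _ => integral_const_mul _ _
  · exact integrable_finset_sum _ (fun l _ => ((integrable_quad μ k l p q).const_mul _))


noncomputable def Dm : Matrix (Fin 2) (Fin 2) ℂ := !![1,0;0,Complex.I]
def Xm : Matrix (Fin 2) (Fin 2) ℂ := !![0,1;1,0]
def Gm : Matrix (Fin 2) (Fin 2) ℂ := !![3,4;4,-3]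

noncomputable def dv : Idx → ℂ := fun a =>
  (if a.1 = 0 then 1 else Complex.I) * (if a.2 = 0 then 1 else Complex.I)

lemma DkN (N : Matrix Idx Idx ℂ) (a b : Idx) :
    ((Dm ⊗ₖ Dm) * N) a b = dv a * N a b := by
  obtain ⟨a1, a2⟩ := a
  fin_cases a1 <;> fin_cases a2 <;>
    simp [Matrix.mul_apply, kroneckerMap_apply, Fintype.sum_prod_type, Fin.sum_univ_two,
      Dm, dv] <;> ring

lemma NDk (N : Matrix Idx Idx ℂ) (a b : Idx) :
    (N * (Dm ⊗ₖ Dm)) a b = N a b * dv b := by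
  obtain ⟨b1, b2⟩ := b
  fin_cases b1 <;> fin_cases b2 <;>
    simp [Matrix.mul_apply, kroneckerMap_apply, Fintype.sum_prod_type, Fin.sum_univ_two,
      Dm, dv] <;> ring

lemma commutant (N : Matrix Idx Idx ℂ)
    (hD : (Dm ⊗ₖ Dm) * N = N * (Dm ⊗ₖ Dm))
    (hX : (Xm ⊗ₖ Xm) * N = N * (Xm ⊗ₖ Xm))
    (hG : (Gm ⊗ₖ Gm) * N = N * (Gm ⊗ₖ Gm)) :
    N = N (0,1) (0,1) • 1 + N (0,1) (1,0) • Sw := by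
  have hz : ∀ a b : Idx, dv a ≠ dv b → N a b = 0 := by
    intro a b hne
    have e := congrFun (congrFun hD a) b
    rw [DkN, NDk] at e
    have e2 : (dv a - dv b) * N a b = 0 := by linear_combination e
    rcases mul_eq_zero.1 e2 with e3 | e3
    · exact absurd (sub_eq_zero.1 e3) hne
    · exact e3
  have h1 := congrFun (congrFun hX ((0:Fin 2),(1:Fin 2))) ((0:Fin 2),(1:Fin 2))
  have h2 := congrFun (congrFun hX ((0:Fin 2),(1:Fin 2))) ((1:Fin 2),(0:Fin 2))
  have h3 := congrFun (congrFun hX ((0:Fin 2),(0:Fin 2))) ((1:Fin 2),(1:Fin 2))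
  have h4 := congrFun (congrFun hG ((0:Fin 2),(0:Fin 2))) ((0:Fin 2),(1:Fin 2))
  simp [Matrix.mul_apply, kroneckerMap_apply, Fintype.sum_prod_type, Fin.sum_univ_two,
    Xm, Gm] at h1 h2 h3 h4
  have z1 : N ((0:Fin 2),(0:Fin 2)) ((0:Fin 2),(1:Fin 2)) = 0 := by
    refine hz _ _ ?_; norm_num [dv, Complex.ext_iff]
  have z2 : N ((1:Fin 2),(1:Fin 2)) ((0:Fin 2),(1:Fin 2)) = 0 := by
    refine hz _ _ ?_; norm_num [dv, Complex.ext_iff]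
  have z3 : N ((0:Fin 2),(0:Fin 2)) ((1:Fin 2),(0:Fin 2)) = 0 := by
    refine hz _ _ ?_; norm_num [dv, Complex.ext_iff]
  have z4 : N ((0:Fin 2),(0:Fin 2)) ((1:Fin 2),(1:Fin 2)) = 0 := by
    refine hz _ _ ?_; norm_num [dv, Complex.ext_iff]
  have h4' : N ((0:Fin 2),(0:Fin 2)) ((0:Fin 2),(0:Fin 2))
      = N ((0:Fin 2),(1:Fin 2)) ((0:Fin 2),(1:Fin 2))
        + N ((0:Fin 2),(1:Fin 2)) ((1:Fin 2),(0:Fin 2)) := by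
    linear_combination (-1/12 : ℂ) * h4 + h1 + (3/2 : ℂ) * z1 + (4/3 : ℂ) * z2
      - (4/3 : ℂ) * z3 + z4
  ext ⟨a1, a2⟩ ⟨b1, b2⟩
  fin_cases a1 <;> fin_cases a2 <;> fin_cases b1 <;> fin_cases b2 <;>
    simp only [Matrix.add_apply, Matrix.smul_apply, Matrix.one_apply, Sw, smul_eq_mul,
      Fin.zero_eta, Fin.mk_one] <;>
    norm_num <;>
    first
      | linear_combination h4'
      | linear_combination h1
      | linear_combination h2
      | linear_combination h3 + h4'
      | exact hz _ _ (by norm_num [dv, Complex.ext_iff])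


end Meas

section Moments
variable (μ : MeasureTheory.Measure uG) [IsProbabilityMeasure μ]

/-- the N-matrix: `K` with row/column (a,b) transposed -/
noncomputable def Nmat (p q : Idx) : Matrix Idx Idx ℂ :=
  Matrix.of fun a b => K μ b a p q

variable (hinv : ∀ g : uG, μ.map (fun U => g * U) = μ)

lemma GhG (g : uG) :
    ((g : Matrix (Fin 2) (Fin 2) ℂ) ⊗ₖ (g : Matrix (Fin 2) (Fin 2) ℂ))ᴴ
      * ((g : Matrix (Fin 2) (Fin 2) ℂ) ⊗ₖ (g : Matrix (Fin 2) (Fin 2) ℂ)) = 1 := by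
  have h1 : (g : Matrix (Fin 2) (Fin 2) ℂ)ᴴ * (g : Matrix (Fin 2) (Fin 2) ℂ) = 1 := by
    have := g.2.1
    rwa [Matrix.star_eq_conjTranspose] at this
  have hk : ∀ A B : Matrix (Fin 2) (Fin 2) ℂ, (A ⊗ₖ B)ᴴ = Aᴴ ⊗ₖ Bᴴ := by
    intro A B
    ext i j
    simp [Matrix.conjTranspose_apply, Matrix.kroneckerMap_apply, star_mul']
  rw [hk, ← Matrix.mul_kronecker_mul, h1, Matrix.one_kronecker_one]

include hinv in
lemma Nfix (g : uG) (p q : Idx) :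
    Nmat μ p q = ((g : Matrix (Fin 2) (Fin 2) ℂ) ⊗ₖ (g : Matrix (Fin 2) (Fin 2) ℂ))
      * Nmat μ p q
      * ((g : Matrix (Fin 2) (Fin 2) ℂ) ⊗ₖ (g : Matrix (Fin 2) (Fin 2) ℂ))ᴴ := by
  ext a b
  show K μ b a p q = _
  rw [Kinv μ hinv g b a p q]
  simp only [Matrix.mul_apply, Matrix.conjTranspose_apply, Matrix.kroneckerMap_apply,
    Nmat, Matrix.of_apply, Finset.sum_mul, Finset.mul_sum]
  refine Finset.sum_congr rfl fun k _ => Finset.sum_congr rfl fun l _ => ?_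
  simp only [starRingEnd_apply, star_mul']
  ring

include hinv in
lemma Ncomm (g : uG) (p q : Idx) :
    ((g : Matrix (Fin 2) (Fin 2) ℂ) ⊗ₖ (g : Matrix (Fin 2) (Fin 2) ℂ)) * Nmat μ p q
      = Nmat μ p q * ((g : Matrix (Fin 2) (Fin 2) ℂ) ⊗ₖ (g : Matrix (Fin 2) (Fin 2) ℂ)) := by
  conv_rhs => rw [Nfix μ hinv g p q]
  rw [Matrix.mul_assoc, Matrix.mul_assoc, GhG, Matrix.mul_one]

lemma memD : Dm ∈ Matrix.unitaryGroup (Fin 2) ℂ := by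
  rw [Matrix.mem_unitaryGroup_iff, Matrix.star_eq_conjTranspose]
  ext i j
  fin_cases i <;> fin_cases j <;>
    simp [Dm, Matrix.mul_apply, Fin.sum_univ_two, Matrix.conjTranspose_apply,
      Matrix.one_apply, Complex.ext_iff]

lemma memX : Xm ∈ Matrix.unitaryGroup (Fin 2) ℂ := by
  rw [Matrix.mem_unitaryGroup_iff, Matrix.star_eq_conjTranspose]
  ext i j
  fin_cases i <;> fin_cases j <;>
    simp [Xm, Matrix.mul_apply, Fin.sum_univ_two, Matrix.conjTranspose_apply,
      Matrix.one_apply, Complex.ext_iff]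

lemma memP : ((1/5 : ℂ) • Gm) ∈ Matrix.unitaryGroup (Fin 2) ℂ := by
  rw [Matrix.mem_unitaryGroup_iff, Matrix.star_eq_conjTranspose]
  ext i j
  fin_cases i <;> fin_cases j <;>
    simp [Gm, Matrix.mul_apply, Fin.sum_univ_two, Matrix.conjTranspose_apply,
      Matrix.one_apply, Matrix.smul_apply, Complex.ext_iff] <;>
    norm_num

include hinv in
lemma Nform (p q : Idx) : Nmat μ p q
    = Nmat μ p q (0,1) (0,1) • 1 + Nmat μ p q (0,1) (1,0) • Sw := by
  apply commutant
  · exact Ncomm μ hinv ⟨Dm, memD⟩ p q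
  · exact Ncomm μ hinv ⟨Xm, memX⟩ p q
  · have h := Ncomm μ hinv ⟨(1/5 : ℂ) • Gm, memP⟩ p q
    have hcoe : ((⟨(1/5 : ℂ) • Gm, memP⟩ : uG) : Matrix (Fin 2) (Fin 2) ℂ)
        = (1/5 : ℂ) • Gm := rfl
    rw [hcoe] at h
    rw [Matrix.smul_kronecker, Matrix.kronecker_smul, smul_smul,
      Matrix.smul_mul, Matrix.mul_smul] at h
    exact smul_right_injective _ (by norm_num : (1/5 : ℂ) * (1/5 : ℂ) ≠ 0) h

lemma Sw_symm (a b : Idx) : Sw a b = Sw b a := by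
  simp only [Sw]
  refine if_congr ⟨fun ⟨u, v⟩ => ⟨v.symm, u.symm⟩, fun ⟨u, v⟩ => ⟨v.symm, u.symm⟩⟩ rfl rfl

include hinv in
lemma Kform (p q a b : Idx) :
    K μ a b p q = K μ (0,1) (0,1) p q * (if a = b then 1 else 0)
      + K μ (1,0) (0,1) p q * Sw a b := by
  have h := congrFun (congrFun (Nform μ hinv p q) b) a
  have hba : Nmat μ p q b a = K μ a b p q := rfl
  rw [hba] at h
  rw [h, Matrix.add_apply, Matrix.smul_apply, Matrix.smul_apply, Matrix.one_apply,
    smul_eq_mul, smul_eq_mul, Sw_symm b a]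
  have e1 : Nmat μ p q (0,1) (0,1) = K μ (0,1) (0,1) p q := rfl
  have e2 : Nmat μ p q (0,1) (1,0) = K μ (1,0) (0,1) p q := rfl
  rw [e1, e2]
  by_cases hab : a = b
  · simp [hab]
  · simp [hab, Ne.symm hab]

/-- pointwise column-orthogonality sum -/
lemma sumKdiag (p q : Idx) :
    ∑ a : Idx, K μ a a p q = if p = q then 1 else 0 := by
  have hpt : ∀ U : uG, ∑ a : Idx, quad a a p q U = if p = q then 1 else 0 := by
    intro U
    have : ∑ a : Idx, quad a a p q U
        = (∑ a1 : Fin 2, conj' ((U : Matrix (Fin 2) (Fin 2) ℂ) a1 p.1)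
            * (U : Matrix (Fin 2) (Fin 2) ℂ) a1 q.1)
          * (∑ a2 : Fin 2, conj' ((U : Matrix (Fin 2) (Fin 2) ℂ) a2 p.2)
            * (U : Matrix (Fin 2) (Fin 2) ℂ) a2 q.2) := by
      rw [Fintype.sum_prod_type, Finset.sum_mul_sum]
      refine Finset.sum_congr rfl fun a1 _ => Finset.sum_congr rfl fun a2 _ => ?_
      simp only [quad, _root_.map_mul]
      ring
    rw [this, UhU, UhU]
    by_cases h1 : p.1 = q.1 <;> by_cases h2 : p.2 = q.2 <;>
      simp [h1, h2, Prod.ext_iff]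
  calc ∑ a : Idx, K μ a a p q = ∫ U, (∑ a : Idx, quad a a p q U) ∂μ := by
        rw [integral_finset_sum _ fun a _ => integrable_quad μ a a p q]
        rfl
    _ = ∫ _U, (if p = q then (1:ℂ) else 0) ∂μ :=
        integral_congr_ae (Filter.Eventually.of_forall hpt)
    _ = if p = q then 1 else 0 := by simp

lemma sumKswap (p q : Idx) :
    ∑ b : Idx, K μ (b.2, b.1) b p q = Sw p q := by
  have hpt : ∀ U : uG, ∑ b : Idx, quad (b.2, b.1) b p q U = Sw p q := by
    intro U
    have : ∑ b : Idx, quad (b.2, b.1) b p q U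
        = (∑ b1 : Fin 2, conj' ((U : Matrix (Fin 2) (Fin 2) ℂ) b1 p.2)
            * (U : Matrix (Fin 2) (Fin 2) ℂ) b1 q.1)
          * (∑ b2 : Fin 2, conj' ((U : Matrix (Fin 2) (Fin 2) ℂ) b2 p.1)
            * (U : Matrix (Fin 2) (Fin 2) ℂ) b2 q.2) := by
      rw [Fintype.sum_prod_type, Finset.sum_mul_sum]
      refine Finset.sum_congr rfl fun b1 _ => Finset.sum_congr rfl fun b2 _ => ?_
      simp only [quad, _root_.map_mul]
      ring
    rw [this, UhU, UhU, Sw]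
    by_cases h1 : p.1 = q.2 <;> by_cases h2 : p.2 = q.1 <;> simp [h1, h2]
  calc ∑ b : Idx, K μ (b.2, b.1) b p q = ∫ U, (∑ b : Idx, quad (b.2, b.1) b p q U) ∂μ := by
        rw [integral_finset_sum _ fun b _ => integrable_quad μ _ b p q]
        rfl
    _ = ∫ _U, Sw p q ∂μ := integral_congr_ae (Filter.Eventually.of_forall hpt)
    _ = Sw p q := by simp

include hinv in
lemma momentK (a b p q : Idx) :
    K μ a b p q = (2 * (if p = q then 1 else 0) - Sw p q)/6 * (if a = b then 1 else 0)
      + (2 * Sw p q - (if p = q then 1 else 0))/6 * Sw a b := by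
  have e1 : (4 : ℂ) * K μ (0,1) (0,1) p q + 2 * K μ (1,0) (0,1) p q
      = if p = q then 1 else 0 := by
    rw [← sumKdiag μ p q]
    rw [Finset.sum_congr rfl fun a _ => Kform μ hinv p q a a]
    simp [Fintype.sum_prod_type, Fin.sum_univ_two, Sw]
    ring
  have e2 : (2 : ℂ) * K μ (0,1) (0,1) p q + 4 * K μ (1,0) (0,1) p q = Sw p q := by
    rw [← sumKswap μ p q]
    rw [Finset.sum_congr rfl fun b _ => Kform μ hinv p q (b.2, b.1) b]
    simp [Fintype.sum_prod_type, Fin.sum_univ_two, Sw, Prod.ext_iff]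
    ring
  have hα : K μ (0,1) (0,1) p q = (2 * (if p = q then 1 else 0) - Sw p q)/6 := by
    linear_combination (1/3 : ℂ) * e1 - (1/6 : ℂ) * e2
  have hβ : K μ (1,0) (0,1) p q = (2 * Sw p q - (if p = q then 1 else 0))/6 := by
    linear_combination (-1/6 : ℂ) * e1 + (1/3 : ℂ) * e2
  rw [Kform μ hinv p q a b, hα, hβ]

include hinv in
lemma twirl (M : Matrix Idx Idx ℂ) :
    (fun p q => ∫ U : uG,
        ((((U : Matrix (Fin 2) (Fin 2) ℂ)ᴴ ⊗ₖ (U : Matrix (Fin 2) (Fin 2) ℂ)ᴴ)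
          * M * ((U : Matrix (Fin 2) (Fin 2) ℂ) ⊗ₖ (U : Matrix (Fin 2) (Fin 2) ℂ)))
          p q) ∂μ)
      = ((2 * M.trace - (M * Sw).trace)/6) • (1 : Matrix Idx Idx ℂ)
        + ((2 * (M * Sw).trace - M.trace)/6) • Sw := by
  have expand : ∀ (U : uG) (p q : Idx),
      ((((U : Matrix (Fin 2) (Fin 2) ℂ)ᴴ ⊗ₖ (U : Matrix (Fin 2) (Fin 2) ℂ)ᴴ)
        * M * ((U : Matrix (Fin 2) (Fin 2) ℂ) ⊗ₖ (U : Matrix (Fin 2) (Fin 2) ℂ))) p q)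
      = ∑ a : Idx, ∑ b : Idx, M a b * quad a b p q U := by
    intro U p q
    simp only [Matrix.mul_apply, Finset.sum_mul]
    rw [Finset.sum_comm]
    refine Finset.sum_congr rfl fun a _ => Finset.sum_congr rfl fun b _ => ?_
    simp only [Matrix.conjTranspose_apply, Matrix.kroneckerMap_apply, quad,
      starRingEnd_apply, star_mul']
    ring
  funext p q
  rw [integral_congr_ae (Filter.Eventually.of_forall fun U => expand U p q)]
  have hI : ∫ U, (∑ a : Idx, ∑ b : Idx, M a b * quad a b p q U) ∂μ
      = ∑ a : Idx, ∫ U, (∑ b : Idx, M a b * quad a b p q U) ∂μ :=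
    integral_finset_sum _ fun a _ =>
      integrable_finset_sum _ fun b _ => (integrable_quad μ a b p q).const_mul _
  rw [hI]
  have step : ∀ a : Idx, ∫ U, (∑ b : Idx, M a b * quad a b p q U) ∂μ
      = ∑ b : Idx, M a b * K μ a b p q := by
    intro a
    rw [integral_finset_sum _ fun b _ => (integrable_quad μ a b p q).const_mul _]
    exact Finset.sum_congr rfl fun b _ => integral_const_mul _ _
  rw [Finset.sum_congr rfl fun a _ => step a]
  have step2 : ∀ a b : Idx, M a b * K μ a b p q
      = M a b * ((2 * (if p = q then 1 else 0) - Sw p q)/6 * (if a = b then 1 else 0)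
        + (2 * Sw p q - (if p = q then 1 else 0))/6 * Sw a b) := by
    intro a b; rw [momentK μ hinv a b p q]
  rw [Finset.sum_congr rfl fun a _ => Finset.sum_congr rfl fun b _ => step2 a b]
  have htr : M.trace = ∑ a : Idx, M a a := rfl
  have htrS : (M * Sw).trace = ∑ a : Idx, ∑ b : Idx, M a b * Sw a b := by
    have : ∀ a : Idx, (M * Sw) a a = ∑ b : Idx, M a b * Sw b a := fun a => rfl
    rw [Matrix.trace]
    refine Finset.sum_congr rfl fun a _ => ?_
    rw [Matrix.diag]
    rw [this a]
    exact Finset.sum_congr rfl fun b _ => by rw [Sw_symm b a]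
  have hsum1 : ∑ a : Idx, ∑ b : Idx,
      M a b * ((2 * (if p = q then 1 else 0) - Sw p q)/6 * (if a = b then 1 else 0)
        + (2 * Sw p q - (if p = q then 1 else 0))/6 * Sw a b)
      = (2 * (if p = q then 1 else 0) - Sw p q)/6 * M.trace
        + (2 * Sw p q - (if p = q then 1 else 0))/6 * (M * Sw).trace := by
    rw [htr, htrS]
    rw [Finset.mul_sum, Finset.mul_sum, ← Finset.sum_add_distrib]
    refine Finset.sum_congr rfl fun a _ => ?_
    rw [show M a a = ∑ b : Idx, M a b * (if a = b then 1 else 0) by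
      simp [Finset.mul_sum, Finset.sum_ite_eq]]
    rw [Finset.mul_sum, Finset.mul_sum, ← Finset.sum_add_distrib]
    refine Finset.sum_congr rfl fun b _ => by ring
  rw [hsum1]
  rw [Matrix.add_apply, Matrix.smul_apply, Matrix.smul_apply, Matrix.one_apply, smul_eq_mul,
    smul_eq_mul]
  ring

/-- second-moment values specialised to the matrix element we need -/
noncomputable def mm (a b c d : Fin 2) : ℂ :=
  -(1/6) * (if a = b ∧ c = d then 1 else 0) + 1/3 * (if a = d ∧ c = b then 1 else 0)

include hinv in
lemma mmK (a b c d : Fin 2) :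
    K μ (a, c) (b, d) ((1 : Fin 2), (0 : Fin 2)) ((0 : Fin 2), (1 : Fin 2)) = mm a b c d := by
  rw [momentK μ hinv]
  simp only [Sw, mm, Prod.mk.injEq]
  norm_num

include hinv in
lemma part2_analytic (h : Matrix Idx Idx ℂ) (hherm : h.IsHermitian) :
    ((∫ U : uG, ∫ W : uG,
        ‖∑ p : Idx, ∑ q : Idx,
          conj' ((U : Matrix (Fin 2) (Fin 2) ℂ) p.1 1 * (W : Matrix (Fin 2) (Fin 2) ℂ) p.2 1)
            * h p q
            * ((U : Matrix (Fin 2) (Fin 2) ℂ) q.1 0 * (W : Matrix (Fin 2) (Fin 2) ℂ) q.2 0)‖ ^ 2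
        ∂μ ∂μ : ℝ) : ℂ)
      = ∑ p : Idx, ∑ p' : Idx, ∑ q : Idx, ∑ q' : Idx,
          h p q * h q' p' * mm p.2 q.2 q'.2 p'.2 * mm p.1 q.1 q'.1 p'.1 := by
  set A : uG → uG → ℂ := fun U W => ∑ p : Idx, ∑ q : Idx,
    conj' ((U : Matrix (Fin 2) (Fin 2) ℂ) p.1 1 * (W : Matrix (Fin 2) (Fin 2) ℂ) p.2 1)
      * h p q
      * ((U : Matrix (Fin 2) (Fin 2) ℂ) q.1 0 * (W : Matrix (Fin 2) (Fin 2) ℂ) q.2 0) with hA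
  have hconj : ∀ p q : Idx, conj' (h p q) = h q p := by
    intro p q
    conv_rhs => rw [← hherm]
    rw [Matrix.conjTranspose_apply, starRingEnd_apply]
  have hprod : ∀ U W : uG, A U W * conj' (A U W)
      = ∑ p : Idx, ∑ p' : Idx, ∑ q : Idx, ∑ q' : Idx,
        (h p q * h q' p'
          * (conj' ((U : Matrix (Fin 2) (Fin 2) ℂ) p.1 1
              * (U : Matrix (Fin 2) (Fin 2) ℂ) q'.1 0)
            * ((U : Matrix (Fin 2) (Fin 2) ℂ) q.1 0
              * (U : Matrix (Fin 2) (Fin 2) ℂ) p'.1 1)))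
        * quad (p.2, q'.2) (q.2, p'.2) ((1 : Fin 2), (0 : Fin 2)) ((0 : Fin 2), (1 : Fin 2)) W := by
    intro U W
    rw [hA]
    simp only [map_sum]
    rw [Finset.sum_mul_sum]
    refine Finset.sum_congr rfl fun p _ => Finset.sum_congr rfl fun p' _ => ?_
    rw [Finset.sum_mul_sum]
    refine Finset.sum_congr rfl fun q _ => Finset.sum_congr rfl fun q' _ => ?_
    simp only [_root_.map_mul, Complex.conj_conj, hconj, quad]
    ring
  have hinner : ∀ U : uG, ∫ W, A U W * conj' (A U W) ∂μ
      = ∑ p : Idx, ∑ p' : Idx, ∑ q : Idx, ∑ q' : Idx,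
        (h p q * h q' p' * mm p.2 q.2 q'.2 p'.2)
          * quad (p.1, q'.1) (q.1, p'.1) ((1 : Fin 2), (0 : Fin 2)) ((0 : Fin 2), (1 : Fin 2)) U := by
    intro U
    rw [integral_congr_ae (Filter.Eventually.of_forall (hprod U))]
    rw [integral_finset_sum _ fun p _ => integrable_finset_sum _ fun p' _ =>
      integrable_finset_sum _ fun q _ => integrable_finset_sum _ fun q' _ =>
        (integrable_quad μ _ _ _ _).const_mul _]
    refine Finset.sum_congr rfl fun p _ => ?_
    rw [integral_finset_sum _ fun p' _ => integrable_finset_sum _ fun q _ =>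
      integrable_finset_sum _ fun q' _ => (integrable_quad μ _ _ _ _).const_mul _]
    refine Finset.sum_congr rfl fun p' _ => ?_
    rw [integral_finset_sum _ fun q _ => integrable_finset_sum _ fun q' _ =>
      (integrable_quad μ _ _ _ _).const_mul _]
    refine Finset.sum_congr rfl fun q _ => ?_
    rw [integral_finset_sum _ fun q' _ => (integrable_quad μ _ _ _ _).const_mul _]
    refine Finset.sum_congr rfl fun q' _ => ?_
    rw [integral_const_mul]
    have : ∫ W, quad (p.2, q'.2) (q.2, p'.2) ((1 : Fin 2), (0 : Fin 2))
        ((0 : Fin 2), (1 : Fin 2)) W ∂μ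
        = K μ (p.2, q'.2) (q.2, p'.2) ((1 : Fin 2), (0 : Fin 2)) ((0 : Fin 2), (1 : Fin 2)) := rfl
    rw [this, mmK μ hinv]
    unfold quad
    ring
  have houter : ∫ U, (∑ p : Idx, ∑ p' : Idx, ∑ q : Idx, ∑ q' : Idx,
        (h p q * h q' p' * mm p.2 q.2 q'.2 p'.2)
          * quad (p.1, q'.1) (q.1, p'.1) ((1 : Fin 2), (0 : Fin 2)) ((0 : Fin 2), (1 : Fin 2)) U) ∂μ
      = ∑ p : Idx, ∑ p' : Idx, ∑ q : Idx, ∑ q' : Idx,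
          h p q * h q' p' * mm p.2 q.2 q'.2 p'.2 * mm p.1 q.1 q'.1 p'.1 := by
    rw [integral_finset_sum _ fun p _ => integrable_finset_sum _ fun p' _ =>
      integrable_finset_sum _ fun q _ => integrable_finset_sum _ fun q' _ =>
        (integrable_quad μ _ _ _ _).const_mul _]
    refine Finset.sum_congr rfl fun p _ => ?_
    rw [integral_finset_sum _ fun p' _ => integrable_finset_sum _ fun q _ =>
      integrable_finset_sum _ fun q' _ => (integrable_quad μ _ _ _ _).const_mul _]
    refine Finset.sum_congr rfl fun p' _ => ?_
    rw [integral_finset_sum _ fun q _ => integrable_finset_sum _ fun q' _ =>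
      (integrable_quad μ _ _ _ _).const_mul _]
    refine Finset.sum_congr rfl fun q _ => ?_
    rw [integral_finset_sum _ fun q' _ => (integrable_quad μ _ _ _ _).const_mul _]
    refine Finset.sum_congr rfl fun q' _ => ?_
    rw [integral_const_mul]
    have : ∫ U, quad (p.1, q'.1) (q.1, p'.1) ((1 : Fin 2), (0 : Fin 2))
        ((0 : Fin 2), (1 : Fin 2)) U ∂μ
        = K μ (p.1, q'.1) (q.1, p'.1) ((1 : Fin 2), (0 : Fin 2)) ((0 : Fin 2), (1 : Fin 2)) := rfl
    rw [this, mmK μ hinv]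
  calc ((∫ U : uG, ∫ W : uG, ‖A U W‖ ^ 2 ∂μ ∂μ : ℝ) : ℂ)
      = ∫ U : uG, ((∫ W : uG, ‖A U W‖ ^ 2 ∂μ : ℝ) : ℂ) ∂μ :=
        (integral_ofReal).symm
    _ = ∫ U : uG, ∫ W : uG, A U W * conj' (A U W) ∂μ ∂μ := by
        refine integral_congr_ae (Filter.Eventually.of_forall fun U => ?_)
        show ((∫ W : uG, ‖A U W‖ ^ 2 ∂μ : ℝ) : ℂ)
          = ∫ W : uG, A U W * conj' (A U W) ∂μ
        have e : ((∫ W : uG, ‖A U W‖ ^ 2 ∂μ : ℝ) : ℂ)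
            = ∫ W : uG, ((‖A U W‖ ^ 2 : ℝ) : ℂ) ∂μ := (integral_ofReal).symm
        rw [e]
        refine integral_congr_ae (Filter.Eventually.of_forall fun W => ?_)
        show ((‖A U W‖ ^ 2 : ℝ) : ℂ) = A U W * conj' (A U W)
        rw [Complex.sq_norm]
        exact (Complex.mul_conj _).symm
    _ = ∫ U : uG, (∑ p : Idx, ∑ p' : Idx, ∑ q : Idx, ∑ q' : Idx,
          (h p q * h q' p' * mm p.2 q.2 q'.2 p'.2)
            * quad (p.1, q'.1) (q.1, p'.1) ((1 : Fin 2), (0 : Fin 2))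
              ((0 : Fin 2), (1 : Fin 2)) U) ∂μ :=
        integral_congr_ae (Filter.Eventually.of_forall hinner)
    _ = _ := houter

end Moments


set_option maxHeartbeats 2000000 in
lemma bigsum (h : Matrix Idx Idx ℂ) (f : Fin 4 → Fin 4 → ℝ)
    (hf : h = ∑ x, ∑ y, ((f x y : ℝ) : ℂ) • (pauli x ⊗ₖ pauli y)) :
    ∑ p : Idx, ∑ p' : Idx, ∑ q : Idx, ∑ q' : Idx,
      h p q * h q' p' * mm p.2 q.2 q'.2 p'.2 * mm p.1 q.1 q'.1 p'.1
    = ((4/9 * ∑ x ∈ Finset.univ.filter (· ≠ (0 : Fin 4)),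
          ∑ y ∈ Finset.univ.filter (· ≠ (0 : Fin 4)), f x y ^ 2 : ℝ) : ℂ) := by
  have hE0000 : h ((0:Fin 2),(0:Fin 2)) ((0:Fin 2),(0:Fin 2))
      = (1 : ℂ) * (1 : ℂ) * ((f 0 0 : ℝ) : ℂ) + (1 : ℂ) * (1 : ℂ) * ((f 0 3 : ℝ) : ℂ) + (1 : ℂ) * (1 : ℂ) * ((f 3 0 : ℝ) : ℂ) + (1 : ℂ) * (1 : ℂ) * ((f 3 3 : ℝ) : ℂ) := by
    rw [hf]; simp [Matrix.sum_apply, Matrix.smul_apply, Matrix.kroneckerMap_apply,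
      Fin.sum_univ_four, pauli, Matrix.one_apply]; ring
  have hE0001 : h ((0:Fin 2),(0:Fin 2)) ((0:Fin 2),(1:Fin 2))
      = (1 : ℂ) * (1 : ℂ) * ((f 0 1 : ℝ) : ℂ) + (1 : ℂ) * ((-Complex.I) : ℂ) * ((f 0 2 : ℝ) : ℂ) + (1 : ℂ) * (1 : ℂ) * ((f 3 1 : ℝ) : ℂ) + (1 : ℂ) * ((-Complex.I) : ℂ) * ((f 3 2 : ℝ) : ℂ) := by
    rw [hf]; simp [Matrix.sum_apply, Matrix.smul_apply, Matrix.kroneckerMap_apply,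
      Fin.sum_univ_four, pauli, Matrix.one_apply]; ring
  have hE0010 : h ((0:Fin 2),(0:Fin 2)) ((1:Fin 2),(0:Fin 2))
      = (1 : ℂ) * (1 : ℂ) * ((f 1 0 : ℝ) : ℂ) + (1 : ℂ) * (1 : ℂ) * ((f 1 3 : ℝ) : ℂ) + ((-Complex.I) : ℂ) * (1 : ℂ) * ((f 2 0 : ℝ) : ℂ) + ((-Complex.I) : ℂ) * (1 : ℂ) * ((f 2 3 : ℝ) : ℂ) := by
    rw [hf]; simp [Matrix.sum_apply, Matrix.smul_apply, Matrix.kroneckerMap_apply,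
      Fin.sum_univ_four, pauli, Matrix.one_apply]; ring
  have hE0011 : h ((0:Fin 2),(0:Fin 2)) ((1:Fin 2),(1:Fin 2))
      = (1 : ℂ) * (1 : ℂ) * ((f 1 1 : ℝ) : ℂ) + (1 : ℂ) * ((-Complex.I) : ℂ) * ((f 1 2 : ℝ) : ℂ) + ((-Complex.I) : ℂ) * (1 : ℂ) * ((f 2 1 : ℝ) : ℂ) + ((-Complex.I) : ℂ) * ((-Complex.I) : ℂ) * ((f 2 2 : ℝ) : ℂ) := by
    rw [hf]; simp [Matrix.sum_apply, Matrix.smul_apply, Matrix.kroneckerMap_apply,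
      Fin.sum_univ_four, pauli, Matrix.one_apply]; ring
  have hE0100 : h ((0:Fin 2),(1:Fin 2)) ((0:Fin 2),(0:Fin 2))
      = (1 : ℂ) * (1 : ℂ) * ((f 0 1 : ℝ) : ℂ) + (1 : ℂ) * (Complex.I : ℂ) * ((f 0 2 : ℝ) : ℂ) + (1 : ℂ) * (1 : ℂ) * ((f 3 1 : ℝ) : ℂ) + (1 : ℂ) * (Complex.I : ℂ) * ((f 3 2 : ℝ) : ℂ) := by
    rw [hf]; simp [Matrix.sum_apply, Matrix.smul_apply, Matrix.kroneckerMap_apply,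
      Fin.sum_univ_four, pauli, Matrix.one_apply]; ring
  have hE0101 : h ((0:Fin 2),(1:Fin 2)) ((0:Fin 2),(1:Fin 2))
      = (1 : ℂ) * (1 : ℂ) * ((f 0 0 : ℝ) : ℂ) + (1 : ℂ) * ((-1) : ℂ) * ((f 0 3 : ℝ) : ℂ) + (1 : ℂ) * (1 : ℂ) * ((f 3 0 : ℝ) : ℂ) + (1 : ℂ) * ((-1) : ℂ) * ((f 3 3 : ℝ) : ℂ) := by
    rw [hf]; simp [Matrix.sum_apply, Matrix.smul_apply, Matrix.kroneckerMap_apply,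
      Fin.sum_univ_four, pauli, Matrix.one_apply]; ring
  have hE0110 : h ((0:Fin 2),(1:Fin 2)) ((1:Fin 2),(0:Fin 2))
      = (1 : ℂ) * (1 : ℂ) * ((f 1 1 : ℝ) : ℂ) + (1 : ℂ) * (Complex.I : ℂ) * ((f 1 2 : ℝ) : ℂ) + ((-Complex.I) : ℂ) * (1 : ℂ) * ((f 2 1 : ℝ) : ℂ) + ((-Complex.I) : ℂ) * (Complex.I : ℂ) * ((f 2 2 : ℝ) : ℂ) := by
    rw [hf]; simp [Matrix.sum_apply, Matrix.smul_apply, Matrix.kroneckerMap_apply,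
      Fin.sum_univ_four, pauli, Matrix.one_apply]; ring
  have hE0111 : h ((0:Fin 2),(1:Fin 2)) ((1:Fin 2),(1:Fin 2))
      = (1 : ℂ) * (1 : ℂ) * ((f 1 0 : ℝ) : ℂ) + (1 : ℂ) * ((-1) : ℂ) * ((f 1 3 : ℝ) : ℂ) + ((-Complex.I) : ℂ) * (1 : ℂ) * ((f 2 0 : ℝ) : ℂ) + ((-Complex.I) : ℂ) * ((-1) : ℂ) * ((f 2 3 : ℝ) : ℂ) := by
    rw [hf]; simp [Matrix.sum_apply, Matrix.smul_apply, Matrix.kroneckerMap_apply,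
      Fin.sum_univ_four, pauli, Matrix.one_apply]; ring
  have hE1000 : h ((1:Fin 2),(0:Fin 2)) ((0:Fin 2),(0:Fin 2))
      = (1 : ℂ) * (1 : ℂ) * ((f 1 0 : ℝ) : ℂ) + (1 : ℂ) * (1 : ℂ) * ((f 1 3 : ℝ) : ℂ) + (Complex.I : ℂ) * (1 : ℂ) * ((f 2 0 : ℝ) : ℂ) + (Complex.I : ℂ) * (1 : ℂ) * ((f 2 3 : ℝ) : ℂ) := by
    rw [hf]; simp [Matrix.sum_apply, Matrix.smul_apply, Matrix.kroneckerMap_apply,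
      Fin.sum_univ_four, pauli, Matrix.one_apply]; ring
  have hE1001 : h ((1:Fin 2),(0:Fin 2)) ((0:Fin 2),(1:Fin 2))
      = (1 : ℂ) * (1 : ℂ) * ((f 1 1 : ℝ) : ℂ) + (1 : ℂ) * ((-Complex.I) : ℂ) * ((f 1 2 : ℝ) : ℂ) + (Complex.I : ℂ) * (1 : ℂ) * ((f 2 1 : ℝ) : ℂ) + (Complex.I : ℂ) * ((-Complex.I) : ℂ) * ((f 2 2 : ℝ) : ℂ) := by
    rw [hf]; simp [Matrix.sum_apply, Matrix.smul_apply, Matrix.kroneckerMap_apply,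
      Fin.sum_univ_four, pauli, Matrix.one_apply]; ring
  have hE1010 : h ((1:Fin 2),(0:Fin 2)) ((1:Fin 2),(0:Fin 2))
      = (1 : ℂ) * (1 : ℂ) * ((f 0 0 : ℝ) : ℂ) + (1 : ℂ) * (1 : ℂ) * ((f 0 3 : ℝ) : ℂ) + ((-1) : ℂ) * (1 : ℂ) * ((f 3 0 : ℝ) : ℂ) + ((-1) : ℂ) * (1 : ℂ) * ((f 3 3 : ℝ) : ℂ) := by
    rw [hf]; simp [Matrix.sum_apply, Matrix.smul_apply, Matrix.kroneckerMap_apply,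
      Fin.sum_univ_four, pauli, Matrix.one_apply]; ring
  have hE1011 : h ((1:Fin 2),(0:Fin 2)) ((1:Fin 2),(1:Fin 2))
      = (1 : ℂ) * (1 : ℂ) * ((f 0 1 : ℝ) : ℂ) + (1 : ℂ) * ((-Complex.I) : ℂ) * ((f 0 2 : ℝ) : ℂ) + ((-1) : ℂ) * (1 : ℂ) * ((f 3 1 : ℝ) : ℂ) + ((-1) : ℂ) * ((-Complex.I) : ℂ) * ((f 3 2 : ℝ) : ℂ) := by
    rw [hf]; simp [Matrix.sum_apply, Matrix.smul_apply, Matrix.kroneckerMap_apply,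
      Fin.sum_univ_four, pauli, Matrix.one_apply]; ring
  have hE1100 : h ((1:Fin 2),(1:Fin 2)) ((0:Fin 2),(0:Fin 2))
      = (1 : ℂ) * (1 : ℂ) * ((f 1 1 : ℝ) : ℂ) + (1 : ℂ) * (Complex.I : ℂ) * ((f 1 2 : ℝ) : ℂ) + (Complex.I : ℂ) * (1 : ℂ) * ((f 2 1 : ℝ) : ℂ) + (Complex.I : ℂ) * (Complex.I : ℂ) * ((f 2 2 : ℝ) : ℂ) := by
    rw [hf]; simp [Matrix.sum_apply, Matrix.smul_apply, Matrix.kroneckerMap_apply,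
      Fin.sum_univ_four, pauli, Matrix.one_apply]; ring
  have hE1101 : h ((1:Fin 2),(1:Fin 2)) ((0:Fin 2),(1:Fin 2))
      = (1 : ℂ) * (1 : ℂ) * ((f 1 0 : ℝ) : ℂ) + (1 : ℂ) * ((-1) : ℂ) * ((f 1 3 : ℝ) : ℂ) + (Complex.I : ℂ) * (1 : ℂ) * ((f 2 0 : ℝ) : ℂ) + (Complex.I : ℂ) * ((-1) : ℂ) * ((f 2 3 : ℝ) : ℂ) := by
    rw [hf]; simp [Matrix.sum_apply, Matrix.smul_apply, Matrix.kroneckerMap_apply,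
      Fin.sum_univ_four, pauli, Matrix.one_apply]; ring
  have hE1110 : h ((1:Fin 2),(1:Fin 2)) ((1:Fin 2),(0:Fin 2))
      = (1 : ℂ) * (1 : ℂ) * ((f 0 1 : ℝ) : ℂ) + (1 : ℂ) * (Complex.I : ℂ) * ((f 0 2 : ℝ) : ℂ) + ((-1) : ℂ) * (1 : ℂ) * ((f 3 1 : ℝ) : ℂ) + ((-1) : ℂ) * (Complex.I : ℂ) * ((f 3 2 : ℝ) : ℂ) := by
    rw [hf]; simp [Matrix.sum_apply, Matrix.smul_apply, Matrix.kroneckerMap_apply,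
      Fin.sum_univ_four, pauli, Matrix.one_apply]; ring
  have hE1111 : h ((1:Fin 2),(1:Fin 2)) ((1:Fin 2),(1:Fin 2))
      = (1 : ℂ) * (1 : ℂ) * ((f 0 0 : ℝ) : ℂ) + (1 : ℂ) * ((-1) : ℂ) * ((f 0 3 : ℝ) : ℂ) + ((-1) : ℂ) * (1 : ℂ) * ((f 3 0 : ℝ) : ℂ) + ((-1) : ℂ) * ((-1) : ℂ) * ((f 3 3 : ℝ) : ℂ) := by
    rw [hf]; simp [Matrix.sum_apply, Matrix.smul_apply, Matrix.kroneckerMap_apply,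
      Fin.sum_univ_four, pauli, Matrix.one_apply]; ring
  rw [show ((4/9 * ∑ x ∈ Finset.univ.filter (· ≠ (0 : Fin 4)),
          ∑ y ∈ Finset.univ.filter (· ≠ (0 : Fin 4)), f x y ^ 2 : ℝ) : ℂ)
      = 4/9 * ((f 1 1 : ℝ) ^ 2 + (f 1 2 : ℝ) ^ 2 + (f 1 3 : ℝ) ^ 2 + (f 2 1 : ℝ) ^ 2
        + (f 2 2 : ℝ) ^ 2 + (f 2 3 : ℝ) ^ 2 + (f 3 1 : ℝ) ^ 2 + (f 3 2 : ℝ) ^ 2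
        + (f 3 3 : ℝ) ^ 2 : ℝ) from by
    simp only [Finset.sum_filter, Fin.sum_univ_four,
      show ((1:Fin 4) ≠ 0) from by decide, show ((2:Fin 4) ≠ 0) from by decide,
      show ((3:Fin 4) ≠ 0) from by decide, if_true, if_false, ite_not]
    push_cast
    ring]
  simp only [Fintype.sum_prod_type, Fin.sum_univ_two]
  simp only [hE0000, hE0001, hE0010, hE0011, hE0100, hE0101, hE0110, hE0111, hE1000, hE1001, hE1010, hE1011, hE1100, hE1101, hE1110, hE1111]
  simp only [mm, Prod.mk.injEq]
  norm_num
  push_cast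
  ring_nf
  simp only [Complex.I_sq]
  ring_nf

end Stmt15

/- STATEMENT 15: for Haar-random single-qubit unitaries, the twirl
∫ (U†⊗U†) M (U⊗U) dU of any two-qubit operator M lies in span{I⊗I, S} (S the swap),
and for Hermitian h with Pauli coefficients f,
∫∫ |⟨v⊥,w⊥|h|v,w⟩|² dv dw = (4/9) ∑_{x,y≥1} f_{xy}², where |v⟩ = U|0⟩, |v⊥⟩ = U|1⟩. -/
theorem stmt15
    (μ : Measure (Matrix.unitaryGroup (Fin 2) ℂ)) [IsProbabilityMeasure μ]
    (hinv : ∀ g : Matrix.unitaryGroup (Fin 2) ℂ, μ.map (fun U => g * U) = μ)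
    (M : Matrix (Fin 2 × Fin 2) (Fin 2 × Fin 2) ℂ)
    (h : Matrix (Fin 2 × Fin 2) (Fin 2 × Fin 2) ℂ) (hherm : h.IsHermitian)
    (f : Fin 4 → Fin 4 → ℝ)
    (hf : h = ∑ x, ∑ y, ((f x y : ℝ) : ℂ) • (pauli x ⊗ₖ pauli y))
    (S : Matrix (Fin 2 × Fin 2) (Fin 2 × Fin 2) ℂ)
    (hS : ∀ p q, S p q = if p.1 = q.2 ∧ p.2 = q.1 then 1 else 0) :
    (∃ c₁ c₂ : ℂ,
      (fun p q => ∫ U : Matrix.unitaryGroup (Fin 2) ℂ,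
          ((((U : Matrix (Fin 2) (Fin 2) ℂ)ᴴ ⊗ₖ (U : Matrix (Fin 2) (Fin 2) ℂ)ᴴ)
            * M * ((U : Matrix (Fin 2) (Fin 2) ℂ) ⊗ₖ (U : Matrix (Fin 2) (Fin 2) ℂ)))
            p q) ∂μ)
        = c₁ • (1 : Matrix (Fin 2 × Fin 2) (Fin 2 × Fin 2) ℂ) + c₂ • S) ∧
    (∫ U : Matrix.unitaryGroup (Fin 2) ℂ, ∫ W : Matrix.unitaryGroup (Fin 2) ℂ,
        ‖∑ p : Fin 2 × Fin 2, ∑ q : Fin 2 × Fin 2,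
          (starRingEnd ℂ) ((U : Matrix (Fin 2) (Fin 2) ℂ) p.1 1
              * (W : Matrix (Fin 2) (Fin 2) ℂ) p.2 1)
            * h p q
            * ((U : Matrix (Fin 2) (Fin 2) ℂ) q.1 0
              * (W : Matrix (Fin 2) (Fin 2) ℂ) q.2 0)‖ ^ 2 ∂μ ∂μ)
      = 4 / 9 * ∑ x ∈ Finset.univ.filter (· ≠ (0 : Fin 4)),
          ∑ y ∈ Finset.univ.filter (· ≠ (0 : Fin 4)), f x y ^ 2 := by
  have hSS : S = Stmt15.Sw := by
    funext p q
    rw [hS]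
    rfl
  constructor
  · refine ⟨(2 * M.trace - (M * S).trace)/6, (2 * (M * S).trace - M.trace)/6, ?_⟩
    rw [hSS]
    exact Stmt15.twirl μ hinv M
  · have h1 := Stmt15.part2_analytic μ hinv h hherm
    have h2 := Stmt15.bigsum h f hf
    have h3 := h1.trans h2
    exact_mod_cast h3
end
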